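/- arXiv:2602.06754 — 8 statements merged into one kernel-verified Lean document; each statement's English description precedes it below -/
import Mathlib

section
/- Let Σ be a nonempty finite set, let p ∈ Δ(Σ) have full support, and let g : Σ → ℝ be non-constant. For δ ≥ 0 define q_δ(u) = p_u e^{δ g_u} / Z(δ) with Z(δ) = Σ_{v∈Σ} p_v e^{δ g_v}, let M(g) = argmax_{u∈Σ} g_u and ε_max(g) = −log(Σ_{u∈M(g)} p_u). If 0 < ε < ε_max(g), then there exists a unique δ ∈ (0,∞) such that KL(q_δ ‖ p) = ε, and q_δ is the unique maximizer of the linear functional q ↦ Σ_{u∈Σ} g_u q_u over the set {q ∈ Δ(Σ) : KL(q ‖ p) ≤ ε}. -/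
open Finset

/-- The probability simplex on a finite type `V`. -/
def simplex (V : Type*) [Fintype V] : Set (V → ℝ) :=
  {q | (∀ u, 0 ≤ q u) ∧ ∑ u, q u = 1}

/-- KL divergence `KL(q ‖ p) = ∑ u, q u * log (q u / p u)`
(the convention `0 · log 0 = 0` holds automatically). -/
noncomputable def KL {V : Type*} [Fintype V] (q p : V → ℝ) : ℝ :=
  ∑ u, q u * Real.log (q u / p u)

/-- The exponentially tilted distribution `q_δ(u) = p_u e^{δ g_u} / Z(δ)`. -/
noncomputable def qExp {V : Type*} [Fintype V] (p g : V → ℝ) (δ : ℝ) : V → ℝ :=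
  fun u => p u * Real.exp (δ * g u) / ∑ v, p v * Real.exp (δ * g v)

/-!
The map `δ ↦ KL(q_δ ‖ p)` is continuous, vanishes at `0`, and tends to `-log p(M(g))` as
`δ → ∞` because `q_δ` converges to `p` conditioned on `M(g)`; the intermediate value theorem
provides `δ`. For every `q` with `∑ q = 1` the Pythagorean identity
`KL(q ‖ q_δ) + KL(q_δ ‖ p) = KL(q ‖ p) + δ (⟨g, q_δ⟩ - ⟨g, q⟩)` holds, so by Gibbs' inequality
`q_δ` is the unique maximiser of `⟨g, ·⟩` on the ball `KL(· ‖ p) ≤ KL(q_δ ‖ p)`. Two admissible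
values of `δ` therefore give the same `q_δ`, and `δ ↦ q_δ` is injective as `g` is non-constant.
-/

open Real Filter Topology InformationTheory

section

variable {V : Type*} [Fintype V]

section KL

lemma KL_self (r : V → ℝ) : KL r r = 0 :=
  sum_eq_zero fun u _ => by by_cases h : r u = 0 <;> simp [h]

lemma KL_eq_sum_mul_klFun {q r : V → ℝ} (hr : ∀ u, r u ≠ 0) (hqr : ∑ u, q u = ∑ u, r u) :
    KL q r = ∑ u, r u * klFun (q u / r u) := by
  have hterm : ∀ u, r u * klFun (q u / r u) = q u * log (q u / r u) + (r u - q u) := by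
    intro u
    rw [klFun_apply]
    field_simp [hr u]
    ring
  rw [sum_congr rfl fun u _ => hterm u, sum_add_distrib, sum_sub_distrib,
    hqr, sub_self, add_zero, KL]

lemma KL_nonneg {q r : V → ℝ} (hq : q ∈ simplex V) (hr : r ∈ simplex V) (hr0 : ∀ u, r u ≠ 0) :
    0 ≤ KL q r := by
  rw [KL_eq_sum_mul_klFun hr0 (hq.2.trans hr.2.symm)]
  exact sum_nonneg fun u _ =>
    mul_nonneg (hr.1 u) (klFun_nonneg (div_nonneg (hq.1 u) (hr.1 u)))

lemma eq_of_KL_eq_zero {q r : V → ℝ} (hq : q ∈ simplex V) (hr : r ∈ simplex V)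
    (hr0 : ∀ u, r u ≠ 0) (hKL : KL q r = 0) : q = r := by
  rw [KL_eq_sum_mul_klFun hr0 (hq.2.trans hr.2.symm)] at hKL
  have hnonneg : ∀ u, 0 ≤ q u / r u := fun u => div_nonneg (hq.1 u) (hr.1 u)
  funext u
  have hu := (sum_eq_zero_iff_of_nonneg fun v _ =>
    mul_nonneg (hr.1 v) (klFun_nonneg (hnonneg v))).mp hKL u (mem_univ u)
  rw [mul_eq_zero, klFun_eq_zero_iff (hnonneg u), div_eq_one_iff_eq (hr0 u)] at hu
  exact hu.resolve_left (hr0 u)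

lemma continuous_mul_log_div {c : ℝ} (hc : c ≠ 0) : Continuous fun x : ℝ => x * log (x / c) := by
  have h : (fun x : ℝ => x * log (x / c)) = fun x => x * log x - x * log c := by
    funext x
    rcases eq_or_ne x 0 with rfl | hx
    · simp
    · rw [log_div hx hc, mul_sub]
  rw [h]
  exact continuous_mul_log.sub (continuous_mul_const _)

lemma continuous_KL_left {p : V → ℝ} (hp : ∀ u, p u ≠ 0) : Continuous fun q : V → ℝ => KL q p :=
  continuous_finsetSum _ fun u _ => (continuous_mul_log_div (hp u)).comp (continuous_apply u)

open Classical in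
noncomputable def condOn (p : V → ℝ) (S : Finset V) : V → ℝ :=
  fun u => (if u ∈ S then p u else 0) / ∑ v ∈ S, p v

lemma KL_condOn {p : V → ℝ} {S : Finset V} (hp : ∀ u, p u ≠ 0) (hS : ∑ v ∈ S, p v ≠ 0) :
    KL (condOn p S) p = -log (∑ v ∈ S, p v) := by
  have houtside : ∀ u ∈ univ, u ∉ S → condOn p S u * log (condOn p S u / p u) = 0 := by
    intro u _ hu
    simp [condOn, hu]
  have hinside : ∀ u ∈ S, condOn p S u * log (condOn p S u / p u)
      = -(p u / (∑ v ∈ S, p v) * log (∑ v ∈ S, p v)) := by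
    intro u hu
    simp only [condOn, if_pos hu]
    rw [div_div_cancel_left' (hp u), log_inv, mul_neg]
  rw [KL, ← sum_subset (subset_univ S) houtside, sum_congr rfl hinside,
    sum_neg_distrib, ← sum_mul, ← sum_div, div_self hS, one_mul]

end KL

section Tilted

variable {p g : V → ℝ}

noncomputable def partitionFn (p g : V → ℝ) (δ : ℝ) : ℝ :=
  ∑ v, p v * exp (δ * g v)

lemma qExp_apply (δ : ℝ) (u : V) : qExp p g δ u = p u * exp (δ * g u) / partitionFn p g δ :=
  rfl

lemma qExp_zero (hp : ∑ u, p u = 1) : qExp p g 0 = p := by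
  funext u
  simp [qExp_apply, partitionFn, hp]

lemma qExp_sub_const (c : ℝ) : qExp p (fun u => g u - c) = qExp p g := by
  funext δ u
  have hshift : ∀ v, p v * exp (δ * (g v - c)) = p v * exp (δ * g v) * exp (-(δ * c)) := by
    intro v
    rw [mul_assoc, ← exp_add, mul_sub, sub_eq_add_neg]
  simp only [qExp_apply, partitionFn, hshift, ← sum_mul]
  exact mul_div_mul_right _ _ (exp_ne_zero _)

variable [Nonempty V]

lemma partitionFn_pos (hp : ∀ u, 0 < p u) (δ : ℝ) : 0 < partitionFn p g δ :=
  sum_pos (fun v _ => mul_pos (hp v) (exp_pos _)) univ_nonempty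

lemma qExp_pos (hp : ∀ u, 0 < p u) (δ : ℝ) (u : V) : 0 < qExp p g δ u :=
  div_pos (mul_pos (hp u) (exp_pos _)) (partitionFn_pos hp δ)

lemma qExp_mem_simplex (hp : ∀ u, 0 < p u) (δ : ℝ) : qExp p g δ ∈ simplex V := by
  refine ⟨fun u => (qExp_pos hp δ u).le, ?_⟩
  simp only [qExp_apply, ← sum_div]
  exact div_self (partitionFn_pos hp δ).ne'

lemma log_qExp (hp : ∀ u, 0 < p u) (δ : ℝ) (u : V) :
    log (qExp p g δ u) = log (p u) + δ * g u - log (partitionFn p g δ) := by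
  rw [qExp_apply, log_div (mul_pos (hp u) (exp_pos _)).ne' (partitionFn_pos hp δ).ne',
    log_mul (hp u).ne' (exp_pos _).ne', log_exp]

lemma qExp_injective (hp : ∀ u, 0 < p u) (hg : ∃ u v, g u ≠ g v) :
    Function.Injective (qExp p g) := by
  intro δ δ' h
  obtain ⟨a, b, hab⟩ := hg
  have ha := congrArg log (congrFun h a)
  have hb := congrArg log (congrFun h b)
  rw [log_qExp hp, log_qExp hp] at ha hb
  have hprod : (δ - δ') * (g a - g b) = 0 := by linear_combination ha - hb
  exact sub_eq_zero.mp ((mul_eq_zero.mp hprod).resolve_right (sub_ne_zero.mpr hab))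

lemma KL_sub_KL_qExp (hp : ∀ u, 0 < p u) (δ : ℝ) {q : V → ℝ} (hq : ∑ u, q u = 1) :
    KL q p - KL q (qExp p g δ) = δ * ∑ u, g u * q u - log (partitionFn p g δ) := by
  have hterm : ∀ u, q u * log (q u / p u) - q u * log (q u / qExp p g δ u)
      = δ * (g u * q u) - q u * log (partitionFn p g δ) := by
    intro u
    rcases eq_or_ne (q u) 0 with h | h
    · simp [h]
    · rw [log_div h (hp u).ne', log_div h (qExp_pos hp δ u).ne', log_qExp hp]
      ring
  rw [KL, KL, ← sum_sub_distrib, sum_congr rfl fun u _ => hterm u,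
    sum_sub_distrib, ← mul_sum, ← sum_mul, hq, one_mul]

lemma KL_add_KL_qExp (hp : ∀ u, 0 < p u) (δ : ℝ) {q : V → ℝ} (hq : ∑ u, q u = 1) :
    KL q (qExp p g δ) + KL (qExp p g δ) p
      = KL q p + δ * (∑ u, g u * qExp p g δ u - ∑ u, g u * q u) := by
  have hself := KL_sub_KL_qExp (g := g) hp δ (qExp_mem_simplex (g := g) hp δ).2
  rw [KL_self, sub_zero] at hself
  linear_combination hself - KL_sub_KL_qExp (g := g) hp δ hq

lemma inner_le_inner_qExp (hp : ∀ u, 0 < p u) {δ : ℝ} (hδ : 0 < δ) {q : V → ℝ}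
    (hq : q ∈ simplex V) (hKL : KL q p ≤ KL (qExp p g δ) p) :
    ∑ u, g u * q u ≤ ∑ u, g u * qExp p g δ u := by
  have hgibbs := KL_nonneg hq (qExp_mem_simplex hp δ) fun u => (qExp_pos (g := g) hp δ u).ne'
  have hpyth := KL_add_KL_qExp hp δ hq.2 (g := g)
  have hprod : 0 ≤ δ * (∑ u, g u * qExp p g δ u - ∑ u, g u * q u) := by linarith
  linarith [nonneg_of_mul_nonneg_right hprod hδ]

lemma eq_qExp_of_inner_eq (hp : ∀ u, 0 < p u) {δ : ℝ} {q : V → ℝ}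
    (hq : q ∈ simplex V) (hKL : KL q p ≤ KL (qExp p g δ) p)
    (hinner : ∑ u, g u * q u = ∑ u, g u * qExp p g δ u) : q = qExp p g δ := by
  have hne : ∀ u, qExp p g δ u ≠ 0 := fun u => (qExp_pos hp δ u).ne'
  have hgibbs := KL_nonneg hq (qExp_mem_simplex hp δ) hne
  have hpyth := KL_add_KL_qExp hp δ hq.2 (g := g)
  rw [hinner, sub_self, mul_zero, add_zero] at hpyth
  exact eq_of_KL_eq_zero hq (qExp_mem_simplex hp δ) hne (by linarith)

end Tilted

section Limit

variable {p g : V → ℝ}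

noncomputable def argmaxSet (g : V → ℝ) : Finset V :=
  univ.filter fun u => ∀ v, g v ≤ g u

lemma tendsto_exp_mul_atTop_of_nonpos {h : ℝ} (hh : h ≤ 0) :
    Tendsto (fun δ => exp (δ * h)) atTop (𝓝 (if h = 0 then 1 else 0)) := by
  rcases hh.lt_or_eq with hneg | rfl
  · rw [if_neg hneg.ne]
    exact tendsto_exp_atBot.comp (tendsto_id.atTop_mul_const_of_neg hneg)
  · simp

variable [Nonempty V]

lemma argmaxSet_nonempty (g : V → ℝ) : (argmaxSet g).Nonempty := by
  obtain ⟨u, -, hu⟩ := exists_max_image univ g univ_nonempty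
  exact ⟨u, mem_filter.mpr ⟨mem_univ u, fun v => hu v (mem_univ v)⟩⟩

lemma continuous_qExp (hp : ∀ u, 0 < p u) : Continuous (qExp p g) := by
  have hZ : Continuous (partitionFn p g) := by unfold partitionFn; fun_prop
  exact continuous_pi fun u =>
    (by fun_prop : Continuous fun δ => p u * exp (δ * g u)).div hZ
      fun δ => (partitionFn_pos hp δ).ne'

lemma tendsto_qExp_atTop (hp : ∀ u, 0 < p u) :
    Tendsto (qExp p g) atTop (𝓝 (condOn p (argmaxSet g))) := by
  classical
  obtain ⟨u₀, -, hu₀⟩ := exists_max_image univ g univ_nonempty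
  set h := fun u => g u - g u₀
  have hmem : ∀ u, u ∈ argmaxSet g ↔ h u = 0 := fun u => by
    simp only [argmaxSet, mem_filter, mem_univ, true_and, h, sub_eq_zero]
    exact ⟨fun hu => le_antisymm (hu₀ u (mem_univ u)) (hu u₀),
      fun hu v => hu ▸ hu₀ v (mem_univ v)⟩
  have hnum : ∀ u, Tendsto (fun δ => p u * exp (δ * h u)) atTop
      (𝓝 (if u ∈ argmaxSet g then p u else 0)) := fun u => by
    have := (tendsto_exp_mul_atTop_of_nonpos (sub_nonpos.mpr (hu₀ u (mem_univ u)))).const_mul (p u)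
    simpa only [hmem, mul_ite, mul_one, mul_zero] using this
  have hZ := tendsto_finsetSum univ fun v _ => hnum v
  rw [sum_ite_mem, univ_inter] at hZ
  have hP : ∑ v ∈ argmaxSet g, p v ≠ 0 :=
    (sum_pos (fun v _ => hp v) (argmaxSet_nonempty g)).ne'
  rw [← qExp_sub_const (g u₀), tendsto_pi_nhds]
  exact fun u => (hnum u).div hZ hP

lemma tendsto_KL_qExp_atTop (hp : ∀ u, 0 < p u) :
    Tendsto (fun δ => KL (qExp p g δ) p) atTop (𝓝 (-log (∑ u ∈ argmaxSet g, p u))) := by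
  have hp0 : ∀ u, p u ≠ 0 := fun u => (hp u).ne'
  rw [← KL_condOn hp0 (sum_pos (fun v _ => hp v) (argmaxSet_nonempty g)).ne']
  exact ((continuous_KL_left hp0).tendsto _).comp (tendsto_qExp_atTop hp)

lemma continuous_KL_qExp (hp : ∀ u, 0 < p u) : Continuous fun δ => KL (qExp p g δ) p :=
  (continuous_KL_left fun u => (hp u).ne').comp (continuous_qExp hp)

end Limit

end

theorem stmt_0 {V : Type*} [Fintype V] [Nonempty V]
    (p : V → ℝ) (hp : p ∈ simplex V) (hppos : ∀ u, 0 < p u)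
    (g : V → ℝ) (hg : ∃ u v, g u ≠ g v)
    (ε : ℝ) (hε0 : 0 < ε)
    (hεmax : ε < - Real.log (∑ u ∈ Finset.univ.filter (fun u => ∀ v, g v ≤ g u), p u)) :
    ∃ δ : ℝ, 0 < δ ∧ KL (qExp p g δ) p = ε ∧
      (∀ δ' : ℝ, 0 < δ' → KL (qExp p g δ') p = ε → δ' = δ) ∧
      (∀ q ∈ simplex V, KL q p ≤ ε → ∑ u, g u * q u ≤ ∑ u, g u * qExp p g δ u) ∧
      (∀ q ∈ simplex V, KL q p ≤ ε →
        ∑ u, g u * q u = ∑ u, g u * qExp p g δ u → q = qExp p g δ) := by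
  have hKL0 : KL (qExp p g 0) p = 0 := by rw [qExp_zero hp.2, KL_self]
  obtain ⟨T, hTε, hT0⟩ := (((tendsto_KL_qExp_atTop hppos).eventually
    (eventually_gt_nhds hεmax)).and (eventually_ge_atTop 0)).exists
  obtain ⟨δ, ⟨hδ0, -⟩, hδε⟩ := intermediate_value_Icc hT0 (continuous_KL_qExp hppos).continuousOn
    ⟨hKL0.trans_le hε0.le, hTε.le⟩
  have hδ : 0 < δ := hδ0.lt_of_ne (by rintro rfl; exact hε0.ne' (hδε.symm.trans hKL0))
  have hmax : ∀ q ∈ simplex V, KL q p ≤ ε → ∑ u, g u * q u ≤ ∑ u, g u * qExp p g δ u :=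
    fun q hq hKL => inner_le_inner_qExp hppos hδ hq (hKL.trans hδε.ge)
  refine ⟨δ, hδ, hδε, fun δ' hδ' hδ'ε => qExp_injective hppos hg ?_, hmax,
    fun q hq hKL => eq_qExp_of_inner_eq hppos hq (hKL.trans hδε.ge)⟩
  have hmem := qExp_mem_simplex (g := g) hppos δ'
  exact eq_qExp_of_inner_eq hppos hmem (hδ'ε.trans hδε.symm).le <| le_antisymm
    (hmax _ hmem hδ'ε.le)
    (inner_le_inner_qExp hppos hδ' (qExp_mem_simplex hppos δ) (hδε.trans hδ'ε.symm).le)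
end

section
/- Let Σ be a nonempty finite set, let τ : Σ → ℝ, and let G = (G_u)_{u∈Σ} be a random vector whose coordinates are i.i.d. with the standard Gumbel distribution. Then almost surely the maximum of v ↦ G_v + τ_v is attained at a unique index, and for every u ∈ Σ, P(u = argmax_{v∈Σ}(G_v + τ_v)) = e^{τ_u} / Σ_{v∈Σ} e^{τ_v}. -/
/-!
Write `F` for the Gumbel CDF. Conditionally on `G u = t`, the index `u` is the strict argmax of
`G v + τ v` exactly when `G v < t + τ u - τ v` for all `v ≠ u`, an event of probability
`∏_{v ≠ u} F (t + τ u - τ v) = F t ^ k` with `k = ∑_{v ≠ u} exp (τ v - τ u)`, because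
`F (t + c) = F t ^ exp (-c)`. As `F (G u)` is uniform on `(0, 1]`, integrating over `t` gives
`1 / (k + 1) = exp (τ u) / ∑ v, exp (τ v)`. These disjoint events have probabilities summing
to `1`, so almost surely one of them occurs.
-/

open Finset MeasureTheory Real Function

noncomputable def gumbelCDF (x : ℝ) : ℝ := exp (-exp (-x))

lemma continuous_gumbelCDF : Continuous gumbelCDF := by unfold gumbelCDF; fun_prop

lemma strictMono_gumbelCDF : StrictMono gumbelCDF := fun x y h => by unfold gumbelCDF; gcongr

lemma gumbelCDF_pos (x : ℝ) : 0 < gumbelCDF x := exp_pos _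

lemma gumbelCDF_lt_one (x : ℝ) : gumbelCDF x < 1 := by
  simpa [gumbelCDF] using exp_pos (-x)

lemma gumbelCDF_add (t c : ℝ) : gumbelCDF (t + c) = gumbelCDF t ^ exp (-c) := by
  rw [gumbelCDF, gumbelCDF, ← exp_mul, neg_add, exp_add]
  ring_nf

lemma gumbelCDF_neg_log_neg_log {t : ℝ} (h0 : 0 < t) (h1 : t < 1) :
    gumbelCDF (-log (-log t)) = t := by
  have : 0 < -log t := neg_pos.2 (log_neg h0 h1)
  rw [gumbelCDF, neg_neg, exp_log this, neg_neg, exp_log h0]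

lemma eq_of_forall_ne_lt {V α : Type*} [Preorder α] {f : V → α} {u w : V}
    (hu : ∀ v ≠ u, f v < f u) (hw : ∀ v ≠ w, f v < f w) : u = w :=
  by_contra fun h => lt_asymm (hu w (Ne.symm h)) (hw u h)

lemma measurableSet_setOf_forall_ne_add_lt_add {V : Type*} [Countable V] (τ : V → ℝ) (u : V) :
    MeasurableSet {g : V → ℝ | ∀ v ≠ u, g v + τ v < g u + τ u} := by
  simp only [Set.ofPred_forall]
  exact .iInter fun v => .iInter fun _ => measurableSet_lt (by fun_prop) (by fun_prop)

lemma pi_setOf_forall_ne_lt_add {V : Type*} [Fintype V] [DecidableEq V] (ν : Measure ℝ)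
    [IsProbabilityMeasure ν] (u : V) (c : V → ℝ) :
    Measure.pi (fun _ : V => ν) {g | ∀ v ≠ u, g v < g u + c v} =
      ∫⁻ t, ∏ v : {v // v ≠ u}, ν (Set.Iio (t + c v)) ∂ν := by
  let T : Set (({v // v = u} → ℝ) × ({v // v ≠ u} → ℝ)) :=
    {q | ∀ v, q.2 v < q.1 ⟨u, rfl⟩ + c v}
  have hT : MeasurableSet T := by
    simp only [T, Set.ofPred_forall]
    exact .iInter fun v => measurableSet_lt (by fun_prop) (by fun_prop)
  have hpre : MeasurableEquiv.piEquivPiSubtypeProd (fun _ : V => ℝ) (· = u) ⁻¹' T =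
      {g | ∀ v ≠ u, g v < g u + c v} :=
    Set.ext fun g => ⟨fun h v hv => h ⟨v, hv⟩, fun h v => h v v.2⟩
  have hslice : ∀ x : {v // v = u} → ℝ,
      Prod.mk x ⁻¹' T = Set.univ.pi fun v : {v // v ≠ u} => Set.Iio (x ⟨u, rfl⟩ + c v) := by
    intro x; ext y; simp [T, Set.mem_pi]
  have hmono : ∀ v : {v // v ≠ u}, Monotone fun t => ν (Set.Iio (t + c v)) :=
    fun v a b hab => measure_mono (Set.Iio_subset_Iio (by linarith))
  rw [← hpre, (measurePreserving_piEquivPiSubtypeProd _ _).measure_preimage hT.nullMeasurableSet,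
    Measure.prod_apply hT]
  simp only [hslice, Measure.pi_pi]
  convert (measurePreserving_eval (fun _ : {v // v = u} => ν) ⟨u, rfl⟩).lintegral_comp
    (Finset.measurable_prod _ fun v _ => (hmono v).measurable)

section Gumbel

variable {ν : Measure ℝ} [IsProbabilityMeasure ν]
  (hν : ∀ x, ν (Set.Iic x) = ENNReal.ofReal (gumbelCDF x))
include hν

lemma map_gumbelCDF : ν.map gumbelCDF = volume.restrict (Set.Ioc 0 1) := by
  have : IsFiniteMeasure (volume.restrict (Set.Ioc (0 : ℝ) 1)) :=
    isFiniteMeasure_restrict.2 (by simp)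
  refine Measure.ext_of_Iic _ _ fun t => ?_
  rw [Measure.map_apply continuous_gumbelCDF.measurable measurableSet_Iic,
    Measure.restrict_apply measurableSet_Iic]
  rcases lt_or_ge t 1 with ht1 | ht1
  · rw [Set.Iic_inter_Ioc_of_le ht1.le, Real.volume_Ioc, sub_zero]
    rcases le_or_gt t 0 with ht0 | ht0
    · have : gumbelCDF ⁻¹' Set.Iic t = ∅ :=
        Set.eq_empty_of_forall_notMem fun x hx => (ht0.trans_lt (gumbelCDF_pos x)).not_ge hx
      rw [this, measure_empty, ENNReal.ofReal_of_nonpos ht0]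
    · obtain ⟨s, rfl⟩ : ∃ s, gumbelCDF s = t := ⟨_, gumbelCDF_neg_log_neg_log ht0 ht1⟩
      have : gumbelCDF ⁻¹' Set.Iic (gumbelCDF s) = Set.Iic s :=
        Set.ext fun x => strictMono_gumbelCDF.le_iff_le
      rw [this, hν]
  · have : gumbelCDF ⁻¹' Set.Iic t = Set.univ :=
      Set.eq_univ_of_forall fun x => (gumbelCDF_lt_one x).le.trans ht1
    rw [this, measure_univ, Set.inter_eq_right.2 (fun x hx => hx.2.trans ht1), Real.volume_Ioc]
    simp

lemma measure_Iio_eq_gumbelCDF (x : ℝ) : ν (Set.Iio x) = ENNReal.ofReal (gumbelCDF x) := by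
  have hpre : gumbelCDF ⁻¹' Set.Iio (gumbelCDF x) = Set.Iio x :=
    Set.ext fun y => strictMono_gumbelCDF.lt_iff_lt
  have hinter : Set.Iio (gumbelCDF x) ∩ Set.Ioc 0 1 = Set.Ioo 0 (gumbelCDF x) := by
    ext y
    simp only [Set.mem_inter_iff, Set.mem_Iio, Set.mem_Ioc, Set.mem_Ioo]
    constructor
    · rintro ⟨hy, hy0, -⟩; exact ⟨hy0, hy⟩
    · rintro ⟨hy0, hy⟩; exact ⟨hy, hy0, (hy.trans (gumbelCDF_lt_one x)).le⟩
  rw [← hpre, ← Measure.map_apply continuous_gumbelCDF.measurable measurableSet_Iio,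
    map_gumbelCDF hν, Measure.restrict_apply measurableSet_Iio, hinter, Real.volume_Ioo, sub_zero]

lemma lintegral_gumbelCDF_rpow {k : ℝ} (hk : 0 ≤ k) :
    ∫⁻ x, ENNReal.ofReal (gumbelCDF x ^ k) ∂ν = ENNReal.ofReal (1 / (k + 1)) := by
  have hmeas : Measurable fun t : ℝ => ENNReal.ofReal (t ^ k) :=
    ENNReal.measurable_ofReal.comp (continuous_rpow_const hk).measurable
  calc ∫⁻ x, ENNReal.ofReal (gumbelCDF x ^ k) ∂ν
      = ∫⁻ t in Set.Ioc 0 1, ENNReal.ofReal (t ^ k) := by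
        rw [← map_gumbelCDF hν, lintegral_map hmeas continuous_gumbelCDF.measurable]
    _ = ENNReal.ofReal (∫ t in Set.Ioc 0 1, t ^ k) := by
        rw [ofReal_integral_eq_lintegral_ofReal]
        · exact (intervalIntegral.intervalIntegrable_rpow' (by linarith)).1
        · filter_upwards [self_mem_ae_restrict measurableSet_Ioc] with x hx
          exact rpow_nonneg hx.1.le k
    _ = ENNReal.ofReal (1 / (k + 1)) := by
        rw [← intervalIntegral.integral_of_le zero_le_one,
          integral_rpow (Or.inl (by linarith))]
        norm_num [zero_rpow (by linarith : k + 1 ≠ 0)]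

lemma pi_gumbel_strictArgmax_eq_softmax {V : Type*} [Fintype V] (τ : V → ℝ) (u : V) :
    Measure.pi (fun _ : V => ν) {g | ∀ v ≠ u, g v + τ v < g u + τ u} =
      ENNReal.ofReal (exp (τ u) / ∑ v, exp (τ v)) := by
  classical
  set k := ∑ v : {v // v ≠ u}, exp (τ v - τ u)
  have hk : 0 ≤ k := sum_nonneg fun v _ => (exp_pos _).le
  have hset : {g : V → ℝ | ∀ v ≠ u, g v + τ v < g u + τ u} =
      {g | ∀ v ≠ u, g v < g u + (τ u - τ v)} := by
    ext g
    refine forall₂_congr fun v _ => ?_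
    constructor <;> intro h <;> linarith
  have hprod : ∀ t, ∏ v : {v // v ≠ u}, ν (Set.Iio (t + (τ u - τ v))) =
      ENNReal.ofReal (gumbelCDF t ^ k) := by
    intro t
    simp only [measure_Iio_eq_gumbelCDF hν, gumbelCDF_add, neg_sub]
    rw [← ENNReal.ofReal_prod_of_nonneg fun v _ => (rpow_pos_of_pos (gumbelCDF_pos t) _).le,
      ← rpow_sum_of_pos (gumbelCDF_pos t)]
  have hsum : ∑ v, exp (τ v) = exp (τ u) * (k + 1) := by
    rw [Fintype.sum_eq_add_sum_subtype_ne _ u, mul_add, mul_sum]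
    simp only [← exp_add, add_sub_cancel]
    ring
  rw [hset, pi_setOf_forall_ne_lt_add, lintegral_congr hprod, lintegral_gumbelCDF_rpow hν hk, hsum]
  field_simp

lemma ae_pi_gumbel_existsUnique_strictArgmax {V : Type*} [Fintype V] [Nonempty V] (τ : V → ℝ) :
    ∀ᵐ g ∂Measure.pi (fun _ : V => ν), ∃! u, ∀ v ≠ u, g v + τ v < g u + τ u := by
  let A (u : V) : Set (V → ℝ) := {g | ∀ v ≠ u, g v + τ v < g u + τ u}
  have hA (u : V) : MeasurableSet (A u) := measurableSet_setOf_forall_ne_add_lt_add τ u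
  have hdisj : Pairwise (Disjoint on A) := fun u w huw =>
    Set.disjoint_left.2 fun g hu hw => huw (eq_of_forall_ne_lt hu hw)
  have hunion : Measure.pi (fun _ : V => ν) (⋃ u, A u) = 1 := by
    rw [measure_iUnion hdisj hA, tsum_fintype]
    simp only [A, pi_gumbel_strictArgmax_eq_softmax hν]
    rw [← ENNReal.ofReal_sum_of_nonneg fun u _ => by positivity, ← sum_div,
      div_self (by positivity), ENNReal.ofReal_one]
  have hae : ∀ᵐ g ∂Measure.pi (fun _ : V => ν), g ∈ ⋃ u, A u := by
    rw [ae_mem_iff_measure_eq (MeasurableSet.iUnion hA).nullMeasurableSet, hunion, measure_univ]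
  filter_upwards [hae] with g hg
  obtain ⟨u, hu⟩ := Set.mem_iUnion.1 hg
  exact ⟨u, hu, fun w hw => eq_of_forall_ne_lt hw hu⟩

end Gumbel

theorem stmt_5_general {V : Type*} [Fintype V] [Nonempty V]
    {Ω : Type*} [MeasurableSpace Ω] (μ : Measure Ω)
    (G : Ω → V → ℝ) (hG : Measurable G)
    (ν : Measure ℝ) [IsProbabilityMeasure ν]
    -- `ν` is the standard Gumbel law: CDF `F(x) = exp (−exp (−x))`
    (hcdf : ∀ x : ℝ, ν (Set.Iic x) = ENNReal.ofReal (Real.exp (-Real.exp (-x))))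
    -- the coordinates of `G` are i.i.d. with law `ν`
    (hlaw : Measure.map G μ = Measure.pi (fun _ : V => ν))
    (τ : V → ℝ) :
    -- a.s. the maximum of `v ↦ G v + τ v` is attained at a unique index
    (∀ᵐ ω ∂μ, ∃! u : V, ∀ v : V, v ≠ u → G ω v + τ v < G ω u + τ u) ∧
    -- Gumbel-max trick: `P(u = argmax_v (G v + τ v)) = e^{τ u} / ∑ v, e^{τ v}`
    ∀ u : V,
      μ {ω | ∀ v : V, v ≠ u → G ω v + τ v < G ω u + τ u} =
        ENNReal.ofReal (Real.exp (τ u) / ∑ v, Real.exp (τ v)) := by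
  refine ⟨ae_of_ae_map (p := fun g => ∃! u, ∀ v ≠ u, g v + τ v < g u + τ u)
    hG.aemeasurable ?_, fun u => ?_⟩
  · rw [hlaw]
    exact ae_pi_gumbel_existsUnique_strictArgmax hcdf τ
  · rw [← pi_gumbel_strictArgmax_eq_softmax hcdf τ u, ← hlaw,
      Measure.map_apply hG (measurableSet_setOf_forall_ne_add_lt_add τ u)]
    rfl

theorem stmt_5 {V : Type*} [Fintype V] [Nonempty V]
    {Ω : Type*} [MeasurableSpace Ω] (μ : Measure Ω) [IsProbabilityMeasure μ]
    (G : Ω → V → ℝ) (hG : Measurable G)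
    (ν : Measure ℝ) [IsProbabilityMeasure ν]
    -- `ν` is the standard Gumbel law: CDF `F(x) = exp (−exp (−x))`
    (hcdf : ∀ x : ℝ, ν (Set.Iic x) = ENNReal.ofReal (Real.exp (-Real.exp (-x))))
    -- the coordinates of `G` are i.i.d. with law `ν`
    (hlaw : Measure.map G μ = Measure.pi (fun _ : V => ν))
    (τ : V → ℝ) :
    -- a.s. the maximum of `v ↦ G v + τ v` is attained at a unique index
    (∀ᵐ ω ∂μ, ∃! u : V, ∀ v : V, v ≠ u → G ω v + τ v < G ω u + τ u) ∧
    -- Gumbel-max trick: `P(u = argmax_v (G v + τ v)) = e^{τ u} / ∑ v, e^{τ v}`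
    ∀ u : V,
      μ {ω | ∀ v : V, v ≠ u → G ω v + τ v < G ω u + τ u} =
        ENNReal.ofReal (Real.exp (τ u) / ∑ v, Real.exp (τ v)) :=
  stmt_5_general μ G hG ν hcdf hlaw τ
end

section
/- Let Σ be a nonempty finite set, let τ : Σ → ℝ, and let G = (G_u)_{u∈Σ} be a random vector whose coordinates are i.i.d. with the standard Gumbel distribution. Then E[max_{v∈Σ}(G_v + τ_v)] = γ + log(Σ_{v∈Σ} e^{τ_v}), where γ is the Euler–Mascheroni constant. -/
/-!
If `E` is standard exponential then `-log E` is standard Gumbel, so the Gumbel mean is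
`-∫₀^∞ log t e^{-t} dt = -Γ'(1) = γ`. The Gumbel CDF turns the maximum of independent
shifted copies into a single shifted copy, since
`∏ᵥ exp(-e^{-(x - τᵥ)}) = exp(-e^{-(x - log ∑ᵥ e^{τᵥ})})`: `maxᵥ (Gᵥ + τᵥ)` has the law of
`G + log ∑ᵥ e^{τᵥ}` with `G` Gumbel, and its mean is `γ + log ∑ᵥ e^{τᵥ}`.
-/

open MeasureTheory ProbabilityTheory Real Set

theorem integral_log_mul_exp_neg :
    ∫ t in Ioi 0, log t * exp (-t) = -eulerMascheroniConstant := by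
  have hGamma_eq : Complex.Gamma =ᶠ[nhds 1] Complex.GammaIntegral := by
    filter_upwards [Complex.continuous_re.isOpen_preimage _ isOpen_Ioi |>.mem_nhds
      (show (1 : ℂ).re ∈ Ioi 0 by norm_num)] with s hs
    exact Complex.Gamma_eq_integral hs
  have hderiv := ((Complex.hasDerivAt_GammaIntegral (s := 1) (by norm_num)).congr_of_eventuallyEq
    hGamma_eq).unique Complex.hasDerivAt_Gamma_one
  simp only [sub_self, Complex.cpow_zero, one_mul, ← Complex.ofReal_mul] at hderiv
  exact_mod_cast hderiv

theorem prod_exp_neg_exp_neg_sub {V : Type*} [Fintype V] [Nonempty V] (τ : V → ℝ) (x : ℝ) :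
    ∏ v, exp (-exp (-(x - τ v))) = exp (-exp (-(x - log (∑ v, exp (τ v))))) := by
  have hsum : 0 < ∑ v, exp (τ v) := Finset.sum_pos (fun v _ => exp_pos _) Finset.univ_nonempty
  simp_rw [← exp_sum, neg_sub, exp_sub, exp_log hsum, Finset.sum_neg_distrib, Finset.sum_div]

theorem continuous_sup'_add {V : Type*} [Fintype V] [Nonempty V] (τ : V → ℝ) :
    Continuous fun y : V → ℝ => Finset.univ.sup' Finset.univ_nonempty fun v => y v + τ v :=
  .finset_sup'_apply _ fun v _ => (continuous_apply v).add continuous_const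

theorem MeasureTheory.Measure.pi_setOf_sup'_add_le {V : Type*} [Fintype V] [Nonempty V]
    (ν : V → Measure ℝ) [∀ v, SigmaFinite (ν v)] (τ : V → ℝ) (x : ℝ) :
    Measure.pi ν {y | Finset.univ.sup' Finset.univ_nonempty (fun v => y v + τ v) ≤ x} =
      ∏ v, ν v (Iic (x - τ v)) := by
  have hset : {y : V → ℝ | Finset.univ.sup' Finset.univ_nonempty (fun v => y v + τ v) ≤ x} =
      Set.univ.pi fun v => Iic (x - τ v) := by
    ext y
    simp only [Set.mem_ofPred_eq, Finset.sup'_le_iff, Finset.mem_univ, true_implies, Set.mem_pi,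
      Set.mem_univ, Set.mem_Iic, le_sub_iff_add_le]
  rw [hset, Measure.pi_pi]

namespace ProbabilityTheory

variable {r : ℝ}

theorem expMeasure_Iic_zero (hr : 0 < r) : expMeasure r (Iic 0) = 0 := by
  have := isProbabilityMeasure_expMeasure hr
  rw [← ofReal_cdf, cdf_expMeasure_eq hr]
  simp

theorem expMeasure_Ici (hr : 0 < r) {a : ℝ} (ha : 0 ≤ a) :
    expMeasure r (Ici a) = ENNReal.ofReal (exp (-(r * a))) := by
  have := isProbabilityMeasure_expMeasure hr
  have hsingleton : expMeasure r {a} = 0 :=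
    withDensity_absolutelyContinuous _ _ (Real.volume_singleton)
  rw [← compl_Iio, prob_compl_eq_one_sub measurableSet_Iio,
    measure_congr (Iio_ae_eq_Iic' hsingleton), ← ofReal_cdf, cdf_expMeasure_eq hr, if_pos ha,
    ← ENNReal.ofReal_one, ← ENNReal.ofReal_sub _ (sub_nonneg.2 (exp_le_one_iff.2 (by nlinarith))),
    sub_sub_cancel]

theorem integral_expMeasure (hr : 0 < r) (f : ℝ → ℝ) :
    ∫ t, f t ∂expMeasure r = ∫ t in Ioi 0, r * exp (-(r * t)) * f t := by
  rw [expMeasure, gammaMeasure, integral_withDensity_eq_integral_toReal_smul (f := gammaPDF 1 r)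
      (measurable_gammaPDFReal 1 r).ennreal_ofReal (.of_forall fun _ => ENNReal.ofReal_lt_top),
    ← integral_Ici_eq_integral_Ioi, ← integral_indicator measurableSet_Ici]
  congr 1 with t
  have hpdf := exponentialPDF_eq r t
  rw [exponentialPDF, exponentialPDFReal] at hpdf
  by_cases ht : 0 ≤ t <;> simp [gammaPDF, hpdf, ht, (exp_pos _).le, hr.le]

noncomputable def gumbelMeasure : Measure ℝ := (expMeasure 1).map (-log)

instance : IsProbabilityMeasure gumbelMeasure :=
  have := isProbabilityMeasure_expMeasure one_pos
  Measure.isProbabilityMeasure_map measurable_log.neg.aemeasurable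

theorem gumbelMeasure_Iic (x : ℝ) : gumbelMeasure (Iic x) = ENNReal.ofReal (exp (-exp (-x))) := by
  have hpos : ∀ᵐ t ∂expMeasure 1, 0 < t := by
    filter_upwards [measure_eq_zero_iff_ae_notMem.1 (expMeasure_Iic_zero one_pos)] with t ht
    simpa using ht
  rw [gumbelMeasure, Measure.map_apply measurable_log.neg measurableSet_Iic,
    ← one_mul (exp (-x)), ← expMeasure_Ici one_pos (exp_pos _).le]
  refine measure_congr <| hpos.mono fun t ht => ?_
  change (-log t ≤ x) = (exp (-x) ≤ t)
  rw [neg_le, le_log_iff_exp_le ht]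

theorem eq_gumbelMeasure_of_Iic (ν : Measure ℝ) [IsFiniteMeasure ν]
    (h : ∀ x, ν (Iic x) = ENNReal.ofReal (exp (-exp (-x)))) : ν = gumbelMeasure :=
  Measure.ext_of_Iic _ _ fun x => by rw [h, gumbelMeasure_Iic]

theorem integral_id_gumbelMeasure : ∫ x, x ∂gumbelMeasure = eulerMascheroniConstant := by
  rw [gumbelMeasure, integral_map (f := fun x => x) measurable_log.neg.aemeasurable
    aestronglyMeasurable_id, integral_expMeasure one_pos]
  simp only [one_mul, Pi.neg_apply, mul_comm (exp _), neg_mul, integral_neg,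
    integral_log_mul_exp_neg, neg_neg]

-- a non-integrable function would have integral `0 ≠ γ`
theorem integrable_id_gumbelMeasure : Integrable (fun x => x) gumbelMeasure :=
  .of_integral_ne_zero <| by
    rw [integral_id_gumbelMeasure]
    linarith [one_half_lt_eulerMascheroniConstant]

theorem map_sup'_add_pi_gumbelMeasure {V : Type*} [Fintype V] [Nonempty V] (τ : V → ℝ) :
    (Measure.pi fun _ : V => gumbelMeasure).map
        (fun y => Finset.univ.sup' Finset.univ_nonempty fun v => y v + τ v) =
      gumbelMeasure.map (· + log (∑ v, exp (τ v))) := by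
  refine Measure.ext_of_Iic _ _ fun x => ?_
  rw [Measure.map_apply (continuous_sup'_add τ).measurable measurableSet_Iic,
    Measure.map_apply (measurable_add_const _) measurableSet_Iic, preimage_add_const_Iic]
  simp only [Set.preimage, Set.mem_Iic, Measure.pi_setOf_sup'_add_le, gumbelMeasure_Iic]
  rw [← ENNReal.ofReal_prod_of_nonneg fun v _ => (exp_pos _).le, prod_exp_neg_exp_neg_sub]

end ProbabilityTheory

theorem stmt_6_general {V : Type*} [Fintype V] [Nonempty V]
    {Ω : Type*} [MeasurableSpace Ω] (μ : Measure Ω)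
    (G : Ω → V → ℝ) (hG : Measurable G)
    (ν : Measure ℝ) [IsProbabilityMeasure ν]
    -- `ν` is the standard Gumbel law: CDF `F(x) = exp (−exp (−x))`
    (hcdf : ∀ x : ℝ, ν (Set.Iic x) = ENNReal.ofReal (Real.exp (-Real.exp (-x))))
    -- the coordinates of `G` are i.i.d. with law `ν`
    (hlaw : Measure.map G μ = Measure.pi (fun _ : V => ν))
    (τ : V → ℝ) :
    -- `E[max_v (G_v + τ_v)] = γ + log (∑ v, e^{τ_v})`
    ∫ ω, Finset.univ.sup' Finset.univ_nonempty (fun v => G ω v + τ v) ∂μ =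
      Real.eulerMascheroniConstant + Real.log (∑ v, Real.exp (τ v)) := by
  obtain rfl := eq_gumbelMeasure_of_Iic ν hcdf
  have hmax := continuous_sup'_add τ
  calc ∫ ω, Finset.univ.sup' Finset.univ_nonempty (fun v => G ω v + τ v) ∂μ
      = ∫ x, x ∂(Measure.pi fun _ : V => gumbelMeasure).map
          (fun y => Finset.univ.sup' Finset.univ_nonempty fun v => y v + τ v) := by
        rw [integral_map (f := fun x => x) hmax.measurable.aemeasurable aestronglyMeasurable_id,
          ← hlaw, integral_map hG.aemeasurable hmax.aestronglyMeasurable]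
    _ = ∫ y, y + log (∑ v, exp (τ v)) ∂gumbelMeasure := by
        rw [map_sup'_add_pi_gumbelMeasure, integral_map (f := fun x => x)
          (measurable_add_const _).aemeasurable aestronglyMeasurable_id]
    _ = eulerMascheroniConstant + log (∑ v, exp (τ v)) := by
        rw [integral_add integrable_id_gumbelMeasure (integrable_const _),
          integral_id_gumbelMeasure, integral_const, probReal_univ, one_smul]

theorem stmt_6 {V : Type*} [Fintype V] [Nonempty V]
    {Ω : Type*} [MeasurableSpace Ω] (μ : Measure Ω) [IsProbabilityMeasure μ]
    (G : Ω → V → ℝ) (hG : Measurable G)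
    (ν : Measure ℝ) [IsProbabilityMeasure ν]
    -- `ν` is the standard Gumbel law: CDF `F(x) = exp (−exp (−x))`
    (hcdf : ∀ x : ℝ, ν (Set.Iic x) = ENNReal.ofReal (Real.exp (-Real.exp (-x))))
    -- the coordinates of `G` are i.i.d. with law `ν`
    (hlaw : Measure.map G μ = Measure.pi (fun _ : V => ν))
    (τ : V → ℝ) :
    -- `E[max_v (G_v + τ_v)] = γ + log (∑ v, e^{τ_v})`
    ∫ ω, Finset.univ.sup' Finset.univ_nonempty (fun v => G ω v + τ v) ∂μ =
      Real.eulerMascheroniConstant + Real.log (∑ v, Real.exp (τ v)) :=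
  stmt_6_general μ G hG ν hcdf hlaw τ
end

section
/- Let Σ be a nonempty finite set, let p ∈ Δ(Σ) have full support, let g : Σ → ℝ, and let δ > 0. Then there exists μ ∈ ℝ such that the distribution q* defined by q*_u = p_u·[1 + δ(g_u + μ)]_+ (where [x]_+ = max(0,x)) lies in Δ(Σ) and maximizes the functional q ↦ Σ_{u∈Σ} g_u q_u − (1/(2δ))·χ²(q, p) over q ∈ Δ(Σ). -/
open Finset

/-- χ² distance `χ²(q, p) = ∑ u, (q u − p u)² / p u`. -/
noncomputable def chiSq {V : Type*} [Fintype V] (q p : V → ℝ) : ℝ :=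
  ∑ u, (q u - p u) ^ 2 / p u

/-!
Adding a multiplier `μ` for the constraint `∑ q = 1`, the Lagrangian
`∑ (g u + μ) q u - (q u - p u)² / (2 δ p u)` separates into one concave quadratic per
coordinate, whose maximizer over `q u ≥ 0` is `p u [1 + δ (g u + μ)]₊`. The total mass of these
maximizers is continuous in `μ`, vanishes for `μ` very negative and is at least
`∑ p = 1` for `μ` large, so by the intermediate value theorem some `μ` makes it a distribution;
on the simplex the Lagrangian and the objective differ by the constant `μ`.
-/

section

variable {V : Type*} [Fintype V]

noncomputable def penalizedObjective (p g : V → ℝ) (δ : ℝ) (q : V → ℝ) : ℝ :=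
  ∑ u, g u * q u - (1 / (2 * δ)) * chiSq q p

noncomputable def truncatedTilt (p g : V → ℝ) (δ μ : ℝ) : V → ℝ :=
  fun u => p u * max 0 (1 + δ * (g u + μ))

lemma sub_sq_div_le_truncated_max {p δ : ℝ} (a : ℝ) {q : ℝ} (hp : 0 < p) (hδ : 0 < δ)
    (hq : 0 ≤ q) :
    a * q - (q - p) ^ 2 / (2 * δ * p) ≤
      a * (p * max 0 (1 + δ * a)) - (p * max 0 (1 + δ * a) - p) ^ 2 / (2 * δ * p) := by
  have hδp : 0 < δ * p := mul_pos hδ hp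
  have hsub : ∀ A x : ℝ, A - x / (2 * δ * p) = (A * (2 * δ * p) - x) / (2 * δ * p) := by
    intro A x; field_simp
  rw [hsub, hsub, div_le_div_iff_of_pos_right (by positivity)]
  rcases max_cases 0 (1 + δ * a) with ⟨hmax, hneg⟩ | ⟨hmax, -⟩ <;> rw [hmax]
  · nlinarith [mul_nonneg hq hδp.le, sq_nonneg q]
  · nlinarith [sq_nonneg (q - p * (1 + δ * a))]

lemma sum_lagrangian_eq {p : V → ℝ} (hp : ∀ u, p u ≠ 0) (g : V → ℝ) (δ μ : ℝ) (q : V → ℝ) :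
    ∑ u, ((g u + μ) * q u - (q u - p u) ^ 2 / (2 * δ * p u)) =
      penalizedObjective p g δ q + μ * ∑ u, q u := by
  rw [penalizedObjective, chiSq, mul_sum, mul_sum, ← sum_sub_distrib, ← sum_add_distrib]
  refine sum_congr rfl fun u _ => ?_
  have := hp u
  field_simp
  ring

lemma isMaxOn_truncatedTilt {p : V → ℝ} (hp : ∀ u, 0 < p u) (g : V → ℝ) {δ : ℝ} (hδ : 0 < δ)
    {μ : ℝ} (hμ : ∑ u, truncatedTilt p g δ μ u = 1) :
    IsMaxOn (penalizedObjective p g δ) (simplex V) (truncatedTilt p g δ μ) := by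
  rintro q ⟨hq0, hq1⟩
  have hp' : ∀ u, p u ≠ 0 := fun u => (hp u).ne'
  set Q := truncatedTilt p g δ μ
  calc penalizedObjective p g δ q
      = ∑ u, ((g u + μ) * q u - (q u - p u) ^ 2 / (2 * δ * p u)) - μ := by
        rw [sum_lagrangian_eq hp', hq1]; ring
    _ ≤ ∑ u, ((g u + μ) * Q u - (Q u - p u) ^ 2 / (2 * δ * p u)) - μ :=
        sub_le_sub_right (sum_le_sum fun u _ =>
          sub_sq_div_le_truncated_max (g u + μ) (hp u) hδ (hq0 u)) μ
    _ = penalizedObjective p g δ Q := by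
        rw [sum_lagrangian_eq hp', hμ]; ring

lemma exists_truncatedTilt_mem_simplex {p : V → ℝ} (hp : p ∈ simplex V) (g : V → ℝ) {δ : ℝ}
    (hδ : 0 < δ) : ∃ μ, truncatedTilt p g δ μ ∈ simplex V := by
  obtain ⟨hp0, hp1⟩ := hp
  let mass : ℝ → ℝ := fun μ => ∑ u, truncatedTilt p g δ μ u
  have hmass : Continuous mass := by unfold mass truncatedTilt; fun_prop
  obtain ⟨M, hM⟩ := (Set.finite_range g).bddAbove
  obtain ⟨m, hm⟩ := (Set.finite_range g).bddBelow
  have hlow : mass (-(1 / δ) - M) = 0 := by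
    refine sum_eq_zero fun u _ => ?_
    have hgu : g u ≤ M := hM ⟨u, rfl⟩
    have hneg : 1 + δ * (g u + (-(1 / δ) - M)) ≤ 0 := by
      have : δ * (g u + (-(1 / δ) - M)) = δ * (g u - M) - 1 := by field_simp; ring
      nlinarith
    rw [truncatedTilt, max_eq_left hneg, mul_zero]
  have hhigh : 1 ≤ mass (-m) := by
    rw [← hp1]
    refine sum_le_sum fun u _ => le_mul_of_one_le_right (hp0 u) (le_max_of_le_right ?_)
    have hgu : m ≤ g u := hm ⟨u, rfl⟩
    nlinarith
  obtain ⟨μ, -, hμ⟩ := intermediate_value_uIcc hmass.continuousOn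
    (Set.mem_uIcc.2 (.inl ⟨hlow ▸ zero_le_one, hhigh⟩))
  exact ⟨μ, fun u => mul_nonneg (hp0 u) (le_max_left _ _), hμ⟩

end

theorem stmt_14_general {V : Type*} [Fintype V]
    (p : V → ℝ) (hp : p ∈ simplex V) (hppos : ∀ u, 0 < p u)
    (g : V → ℝ) (δ : ℝ) (hδ : 0 < δ) :
    ∃ μ : ℝ,
      -- `q*_u = p_u [1 + δ (g_u + μ)]₊` is a distribution
      (fun u => p u * max 0 (1 + δ * (g u + μ))) ∈ simplex V ∧
      -- and it maximizes the penalized objective over the simplex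
      (∀ q ∈ simplex V,
        ∑ u, g u * q u - (1 / (2 * δ)) * chiSq q p ≤
          ∑ u, g u * (p u * max 0 (1 + δ * (g u + μ))) -
            (1 / (2 * δ)) * chiSq (fun u => p u * max 0 (1 + δ * (g u + μ))) p) := by
  obtain ⟨μ, hμ⟩ := exists_truncatedTilt_mem_simplex hp g hδ
  exact ⟨μ, hμ, fun q hq => isMaxOn_truncatedTilt hppos g hδ hμ.2 hq⟩

theorem stmt_14 {V : Type*} [Fintype V] [Nonempty V]
    (p : V → ℝ) (hp : p ∈ simplex V) (hppos : ∀ u, 0 < p u)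
    (g : V → ℝ) (δ : ℝ) (hδ : 0 < δ) :
    ∃ μ : ℝ,
      -- `q*_u = p_u [1 + δ (g_u + μ)]₊` is a distribution
      (fun u => p u * max 0 (1 + δ * (g u + μ))) ∈ simplex V ∧
      -- and it maximizes the penalized objective over the simplex
      (∀ q ∈ simplex V,
        ∑ u, g u * q u - (1 / (2 * δ)) * chiSq q p ≤
          ∑ u, g u * (p u * max 0 (1 + δ * (g u + μ))) -
            (1 / (2 * δ)) * chiSq (fun u => p u * max 0 (1 + δ * (g u + μ))) p) :=
  stmt_14_general p hp hppos g δ hδ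
end

section
/- Let Σ be a nonempty finite set, let p ∈ Δ(Σ) have full support, let g : Σ → ℝ be non-constant, and let δ > 0 satisfy δ ≤ 1/(max_{u∈Σ} g_u − min_{u∈Σ} g_u). Then the function q* defined by q*_u = p_u·(1 + δ(g_u − Σ_{v∈Σ} p_v g_v)) lies in Δ(Σ) and maximizes the functional q ↦ Σ_{u∈Σ} g_u q_u − (1/(2δ))·χ²(q, p) over q ∈ Δ(Σ). -/
/-!
Write `q* = p (1 + δ (g − 𝔼_p g))`, so that `(q* − p) / p = δ (g − 𝔼_p g)`. Expanding
`χ²(q, p)` around `q*`, the cross term is `δ ⟪g, q − q*⟫` because `∑ q = ∑ q* = 1`, so for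
every `q` of total mass one the penalized objective `F` satisfies
`F q = F q* − ∑ (q − q*)² / p / (2δ)`; hence `q*` is a maximizer. The bound
`δ (max g − min g) ≤ 1` is exactly what keeps `q*` nonnegative.
-/

open Finset

theorem chiSq_eq_add {V : Type*} [Fintype V] (q r p : V → ℝ) :
    chiSq q p = chiSq r p + 2 * ∑ u, (q u - r u) * (r u - p u) / p u +
      ∑ u, (q u - r u) ^ 2 / p u := by
  simp only [chiSq, mul_sum, ← sum_add_distrib]
  exact sum_congr rfl fun u _ => by ring

theorem sum_mul_le_sup' {V : Type*} [Fintype V] [Nonempty V] {p : V → ℝ}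
    (hp : p ∈ simplex V) (g : V → ℝ) :
    ∑ v, p v * g v ≤ univ.sup' univ_nonempty g :=
  calc ∑ v, p v * g v ≤ ∑ v, p v * univ.sup' univ_nonempty g :=
        sum_le_sum fun v _ => mul_le_mul_of_nonneg_left (le_sup' g (mem_univ v)) (hp.1 v)
    _ = univ.sup' univ_nonempty g := by rw [← sum_mul, hp.2, one_mul]

section Tilt

variable {V : Type*} [Fintype V]

def chiSqTilt (p g : V → ℝ) (δ : ℝ) : V → ℝ :=
  fun u => p u * (1 + δ * (g u - ∑ v, p v * g v))

theorem sum_chiSqTilt {p : V → ℝ} (hp : ∑ u, p u = 1) (g : V → ℝ) (δ : ℝ) :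
    ∑ u, chiSqTilt p g δ u = 1 := by
  simp only [chiSqTilt, mul_add, mul_one, mul_sub, sum_add_distrib, sum_sub_distrib,
    mul_left_comm (p _) δ, ← mul_sum, ← sum_mul, hp]
  ring

theorem chiSqTilt_mem_simplex [Nonempty V] {p : V → ℝ} (hp : p ∈ simplex V) (g : V → ℝ)
    {δ : ℝ} (hδ : 0 ≤ δ)
    (hδle : δ * (univ.sup' univ_nonempty g - univ.inf' univ_nonempty g) ≤ 1) :
    chiSqTilt p g δ ∈ simplex V := by
  refine ⟨fun u => mul_nonneg (hp.1 u) ?_, sum_chiSqTilt hp.2 g δ⟩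
  have hmean := sum_mul_le_sup' hp g
  have hmin : univ.inf' univ_nonempty g ≤ g u := inf'_le g (mem_univ u)
  nlinarith [mul_le_mul_of_nonneg_left hmin hδ, mul_le_mul_of_nonneg_left hmean hδ]

theorem sum_sub_chiSqTilt_mul_div {p q : V → ℝ} (hp : ∑ u, p u = 1) (hp0 : ∀ u, p u ≠ 0)
    (hq : ∑ u, q u = 1) (g : V → ℝ) (δ : ℝ) :
    ∑ u, (q u - chiSqTilt p g δ u) * (chiSqTilt p g δ u - p u) / p u =
      δ * (∑ u, g u * q u - ∑ u, g u * chiSqTilt p g δ u) := by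
  set m := ∑ v, p v * g v
  have hterm : ∀ u, (q u - chiSqTilt p g δ u) * (chiSqTilt p g δ u - p u) / p u =
      δ * (g u * q u - g u * chiSqTilt p g δ u) - δ * m * (q u - chiSqTilt p g δ u) := by
    intro u
    simp only [chiSqTilt]
    field_simp [hp0 u]
    ring
  simp only [hterm, sum_sub_distrib, ← mul_sum, hq, sum_chiSqTilt hp]
  ring

theorem penalizedObjective_chiSqTilt_sub {p q : V → ℝ} (hp : ∑ u, p u = 1)
    (hp0 : ∀ u, p u ≠ 0) (hq : ∑ u, q u = 1) (g : V → ℝ) {δ : ℝ} (hδ : δ ≠ 0) :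
    penalizedObjective p g δ (chiSqTilt p g δ) - penalizedObjective p g δ q =
      (1 / (2 * δ)) * ∑ u, (q u - chiSqTilt p g δ u) ^ 2 / p u := by
  rw [penalizedObjective, penalizedObjective, chiSq_eq_add q (chiSqTilt p g δ),
    sum_sub_chiSqTilt_mul_div hp hp0 hq]
  field_simp
  ring

theorem penalizedObjective_le_chiSqTilt {p q : V → ℝ} (hp : ∑ u, p u = 1)
    (hppos : ∀ u, 0 < p u) (hq : ∑ u, q u = 1) (g : V → ℝ) {δ : ℝ} (hδ : 0 < δ) :
    penalizedObjective p g δ q ≤ penalizedObjective p g δ (chiSqTilt p g δ) := by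
  rw [← sub_nonneg, penalizedObjective_chiSqTilt_sub hp (fun u => (hppos u).ne') hq g hδ.ne']
  exact mul_nonneg (by positivity) (sum_nonneg fun u _ => div_nonneg (sq_nonneg _) (hppos u).le)

end Tilt

theorem stmt_15_general {V : Type*} [Fintype V] [Nonempty V]
    (p : V → ℝ) (hp : p ∈ simplex V) (hppos : ∀ u, 0 < p u)
    (g : V → ℝ)
    (δ : ℝ) (hδ : 0 < δ)
    (hδle : δ ≤ 1 / (Finset.univ.sup' Finset.univ_nonempty g -
      Finset.univ.inf' Finset.univ_nonempty g)) :
    -- `q*_u = p_u (1 + δ (g_u − ∑ v, p_v g_v))` is a distribution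
    (fun u => p u * (1 + δ * (g u - ∑ v, p v * g v))) ∈ simplex V ∧
    -- and it maximizes the penalized objective over the simplex
    (∀ q ∈ simplex V,
      ∑ u, g u * q u - (1 / (2 * δ)) * chiSq q p ≤
        ∑ u, g u * (p u * (1 + δ * (g u - ∑ v, p v * g v))) -
          (1 / (2 * δ)) *
            chiSq (fun u => p u * (1 + δ * (g u - ∑ v, p v * g v))) p) := by
  have hrange : 0 ≤ univ.sup' univ_nonempty g - univ.inf' univ_nonempty g :=
    sub_nonneg.mpr <|
      (inf'_le g (mem_univ (Classical.arbitrary V))).trans (le_sup' g (mem_univ _))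
  exact ⟨chiSqTilt_mem_simplex hp g hδ.le (mul_le_of_le_div₀ zero_le_one hrange hδle),
    fun q hq => penalizedObjective_le_chiSqTilt hp.2 hppos hq.2 g hδ⟩

theorem stmt_15 {V : Type*} [Fintype V] [Nonempty V]
    (p : V → ℝ) (hp : p ∈ simplex V) (hppos : ∀ u, 0 < p u)
    (g : V → ℝ) (hg : ∃ u v, g u ≠ g v)
    (δ : ℝ) (hδ : 0 < δ)
    (hδle : δ ≤ 1 / (Finset.univ.sup' Finset.univ_nonempty g -
      Finset.univ.inf' Finset.univ_nonempty g)) :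
    -- `q*_u = p_u (1 + δ (g_u − ∑ v, p_v g_v))` is a distribution
    (fun u => p u * (1 + δ * (g u - ∑ v, p v * g v))) ∈ simplex V ∧
    -- and it maximizes the penalized objective over the simplex
    (∀ q ∈ simplex V,
      ∑ u, g u * q u - (1 / (2 * δ)) * chiSq q p ≤
        ∑ u, g u * (p u * (1 + δ * (g u - ∑ v, p v * g v))) -
          (1 / (2 * δ)) *
            chiSq (fun u => p u * (1 + δ * (g u - ∑ v, p v * g v))) p) :=
  stmt_15_general p hp hppos g δ hδ hδle
end

section
/- Let Σ be a nonempty finite set, let p ∈ Δ(Σ) have full support, let m ∈ ℕ, and let g^{(1)}, …, g^{(m)} : Σ → {0,1}. Define q^{(0)} = p and, recursively, q^{(i)}_u = q^{(i−1)}_u · (1 + (g^{(i)}_u − Σ_{v∈Σ} q^{(i−1)}_v g^{(i)}_v)) for all u ∈ Σ. Then each q^{(i)} lies in Δ(Σ), and for every i ∈ {1,…,m}, q^{(i)} maximizes the functional q ↦ Σ_{u∈Σ} g^{(i)}_u q_u − (1/2)·Σ_{u∈Σ} (q_u − q^{(i−1)}_u)²/q^{(i−1)}_u over q ∈ Δ(Σ).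 -/
/-!
The update `r ↦ r' = r (1 + f - ⟨r, f⟩)` adds to `r` a signed measure of total mass zero, and for
`0 ≤ f ≤ 1` it stays positive. On the support of `r` it solves `f = (r' - r) / r + ⟨r, f⟩`, which
completes the square: for every `q` of total mass one, the penalized score of `q` is that of `r'`
minus `½ ∑ (q - r')² / r`.
-/

open Finset

namespace Simplex

variable {V : Type*} [Fintype V]

def tilt (r f : V → ℝ) : V → ℝ :=
  fun u => r u * (1 + (f u - ∑ v, r v * f v))

noncomputable def penalizedScore (r f q : V → ℝ) : ℝ :=
  ∑ u, f u * q u - (1 / 2) * ∑ u, (q u - r u) ^ 2 / r u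

variable {r f q : V → ℝ}

theorem sum_tilt (hr : ∑ u, r u = 1) : ∑ u, tilt r f u = 1 := by
  simp only [tilt, mul_add, mul_sub, mul_one, sum_add_distrib, sum_sub_distrib, ← sum_mul, hr]
  ring

theorem tilt_pos (hr : ∑ u, r u = 1) (hpos : ∀ u, 0 < r u)
    (hf0 : ∀ u, 0 ≤ f u) (hf1 : ∀ u, f u ≤ 1) (u : V) : 0 < tilt r f u := by
  -- `1 - ∑ r f = ∑ r (1 - f) ≥ r u (1 - f u)`, so the factor is at least `f u + (1 - f u) r u > 0`.
  have hslack : r u * (1 - f u) ≤ 1 - ∑ v, r v * f v := by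
    have : 1 - ∑ v, r v * f v = ∑ v, r v * (1 - f v) := by
      simp only [mul_sub, mul_one, sum_sub_distrib, hr]
    rw [this]
    exact single_le_sum (fun v _ => mul_nonneg (hpos v).le (sub_nonneg.mpr (hf1 v))) (mem_univ u)
  have hconvex : 0 < f u + r u * (1 - f u) := by
    have := mul_nonneg (hpos u).le (sub_nonneg.mpr (hf1 u))
    rcases (hf0 u).eq_or_lt with h | h
    · rw [← h]; linarith [hpos u]
    · linarith
  have hfactor : 0 < 1 + (f u - ∑ v, r v * f v) := by linarith
  exact mul_pos (hpos u) hfactor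

theorem penalizedScore_add_chiSq (hr : ∑ u, r u = 1) (hne : ∀ u, r u ≠ 0)
    (hq : ∑ u, q u = 1) :
    penalizedScore r f q + (1 / 2) * ∑ u, (q u - tilt r f u) ^ 2 / r u =
      penalizedScore r f (tilt r f) := by
  set μ := ∑ v, r v * f v
  have hpoint : ∀ u, f u * q u - (1 / 2) * ((q u - r u) ^ 2 / r u)
      + (1 / 2) * ((q u - tilt r f u) ^ 2 / r u) =
      f u * tilt r f u - (1 / 2) * ((tilt r f u - r u) ^ 2 / r u)
      + μ * (q u - tilt r f u) := by
    intro u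
    have := hne u
    simp only [tilt]
    field_simp
    ring
  have hsum := sum_congr rfl fun u (_ : u ∈ univ) => hpoint u
  simp only [sum_add_distrib, sum_sub_distrib, ← mul_sum, hq, sum_tilt hr] at hsum
  unfold penalizedScore
  linarith

theorem penalizedScore_le_tilt (hr : ∑ u, r u = 1) (hpos : ∀ u, 0 < r u)
    (hq : ∑ u, q u = 1) : penalizedScore r f q ≤ penalizedScore r f (tilt r f) := by
  rw [← penalizedScore_add_chiSq hr (fun u => (hpos u).ne') hq]
  have : 0 ≤ ∑ u, (q u - tilt r f u) ^ 2 / r u :=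
    sum_nonneg fun u _ => div_nonneg (sq_nonneg _) (hpos u).le
  linarith

end Simplex

open Simplex in
theorem stmt_16_general {V : Type*} [Fintype V]
    (p : V → ℝ) (hp : p ∈ simplex V) (hppos : ∀ u, 0 < p u)
    (m : ℕ) (g : Fin m → V → ℝ)
    -- the scores are binary: `g^{(i)}_u ∈ {0, 1}`
    (hg : ∀ i u, g i u = 0 ∨ g i u = 1)
    -- `Q 0 = p` and `Q (i+1)_u = Q i_u (1 + (g^{(i+1)}_u − ∑ v, Q i_v g^{(i+1)}_v))`
    (Q : ℕ → V → ℝ) (hQ0 : Q 0 = p)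
    (hQrec : ∀ i : Fin m, ∀ u,
      Q (i + 1) u = Q i u * (1 + (g i u - ∑ v, Q i v * g i v))) :
    -- each `Q i`, `i = 0, …, m`, is a distribution
    (∀ i : ℕ, i ≤ m → Q i ∈ simplex V) ∧
    -- and `Q (i+1)` maximizes the `χ²`-penalized objective relative to `Q i`
    (∀ i : Fin m, ∀ q ∈ simplex V,
      ∑ u, g i u * q u - (1 / 2) * ∑ u, (q u - Q i u) ^ 2 / Q i u ≤
        ∑ u, g i u * Q (i + 1) u -
          (1 / 2) * ∑ u, (Q (i + 1) u - Q i u) ^ 2 / Q i u) := by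
  have hQtilt : ∀ i : Fin m, Q (i + 1) = tilt (Q i) (g i) := fun i => funext (hQrec i)
  have hinv : ∀ i ≤ m, (∀ u, 0 < Q i u) ∧ ∑ u, Q i u = 1 := by
    intro i hi
    induction i with
    | zero => exact hQ0 ▸ ⟨hppos, hp.2⟩
    | succ n ih =>
      obtain ⟨hpos, hsum⟩ := ih (by omega)
      have hg0 : ∀ u, 0 ≤ g ⟨n, hi⟩ u := fun u => by rcases hg ⟨n, hi⟩ u with h | h <;> simp [h]
      have hg1 : ∀ u, g ⟨n, hi⟩ u ≤ 1 := fun u => by rcases hg ⟨n, hi⟩ u with h | h <;> simp [h]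
      rw [hQtilt ⟨n, hi⟩]
      exact ⟨tilt_pos hsum hpos hg0 hg1, sum_tilt hsum⟩
  refine ⟨fun i hi => ⟨fun u => ((hinv i hi).1 u).le, (hinv i hi).2⟩, fun i q hq => ?_⟩
  obtain ⟨hpos, hsum⟩ := hinv i i.isLt.le
  rw [hQtilt i]
  exact penalizedScore_le_tilt hsum hpos hq.2

theorem stmt_16 {V : Type*} [Fintype V] [Nonempty V]
    (p : V → ℝ) (hp : p ∈ simplex V) (hppos : ∀ u, 0 < p u)
    (m : ℕ) (g : Fin m → V → ℝ)
    -- the scores are binary: `g^{(i)}_u ∈ {0, 1}`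
    (hg : ∀ i u, g i u = 0 ∨ g i u = 1)
    -- `Q 0 = p` and `Q (i+1)_u = Q i_u (1 + (g^{(i+1)}_u − ∑ v, Q i_v g^{(i+1)}_v))`
    (Q : ℕ → V → ℝ) (hQ0 : Q 0 = p)
    (hQrec : ∀ i : Fin m, ∀ u,
      Q (i + 1) u = Q i u * (1 + (g i u - ∑ v, Q i v * g i v))) :
    -- each `Q i`, `i = 0, …, m`, is a distribution
    (∀ i : ℕ, i ≤ m → Q i ∈ simplex V) ∧
    -- and `Q (i+1)` maximizes the `χ²`-penalized objective relative to `Q i`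
    (∀ i : Fin m, ∀ q ∈ simplex V,
      ∑ u, g i u * q u - (1 / 2) * ∑ u, (q u - Q i u) ^ 2 / Q i u ≤
        ∑ u, g i u * Q (i + 1) u -
          (1 / 2) * ∑ u, (Q (i + 1) u - Q i u) ^ 2 / Q i u) :=
  stmt_16_general p hp hppos m g hg Q hQ0 hQrec
end

section
/- Let Σ be a nonempty finite set, let p ∈ Δ(Σ) have full support, let g : Σ → ℝ, and let ε ≥ 0. Consider maximizing the linear functional q ↦ Σ_{u∈Σ} g_u q_u over the feasible set {q ∈ Δ(Σ) : −Σ_{u∈Σ} q_u log p_u ≤ −Σ_{u∈Σ} p_u log p_u + ε}. Then this feasible set is nonempty and compact, and there exists an optimal solution q* whose support has size at most 2, i.e. q* is a convex combination of at most two Dirac point masses. -/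
open Finset

/-- The feasible set of the hard-PPL constrained problem:
distributions `q` with `−∑ u, q u log p u ≤ −∑ u, p u log p u + ε`. -/
noncomputable def pplFeasible {V : Type*} [Fintype V] (p : V → ℝ) (ε : ℝ) : Set (V → ℝ) :=
  {q | q ∈ simplex V ∧
    -∑ u, q u * Real.log (p u) ≤ -∑ u, p u * Real.log (p u) + ε}

/-!
The feasible set is the probability simplex cut by a single linear inequality, so it is a closed
subset of the compact simplex and contains `p`. Among the maximizers of the linear objective take
one, `q`, of minimal support. If its support had three or more points, the two linear conditions
`∑ d = 0` and `∑ d log p = 0` would leave a nonzero direction `d` supported there; choosing its sign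
so that the objective does not decrease, move along `d` until a coordinate of `q` vanishes. This
stays feasible and optimal and shrinks the support, a contradiction.
-/

section

variable {V : Type*} [Fintype V]

theorem exists_neg_of_sum_eq_zero {M : Type*} [AddCommMonoid M] [LinearOrder M] [AddLeftMono M]
    {d : V → M} (hd : d ≠ 0) (hsum : ∑ u, d u = 0) : ∃ u, d u < 0 := by
  by_contra! h
  exact hd <| funext fun u => (sum_eq_zero_iff_of_nonneg fun v _ => h v).1 hsum u (mem_univ u)

theorem exists_ne_zero_sum_eq_zero_sum_mul_eq_zero {K : Type*} [Field K] {s : Finset V}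
    (hs : 2 < s.card) (c : V → K) :
    ∃ d : V → K, d ≠ 0 ∧ (∀ u ∉ s, d u = 0) ∧ ∑ u, d u = 0 ∧ ∑ u, d u * c u = 0 := by
  classical
  -- `d` is a nonzero kernel element of `d ↦ (∑ d, ∑ d c, d|sᶜ)`, whose target has dimension
  -- `2 + |sᶜ| < |V|`.
  let ℓ : (V → K) →ₗ[K] K × K × ({u // u ∉ s} → K) :=
    (Fintype.linearCombination K fun _ => 1).prod
      ((Fintype.linearCombination K c).prod (LinearMap.funLeft K K Subtype.val))
  have hrank : Module.finrank K (K × K × ({u // u ∉ s} → K)) < Module.finrank K (V → K) := by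
    simp only [Module.finrank_prod, Module.finrank_self, Module.finrank_fintype_fun_eq_card,
      Fintype.card_subtype_compl, Fintype.card_coe]
    have := s.card_le_univ
    omega
  obtain ⟨d, hd, hd0⟩ :=
    (Submodule.ne_bot_iff _).mp (LinearMap.ker_ne_bot_of_finrank_lt (f := ℓ) hrank)
  simp only [LinearMap.ker_prod, Submodule.mem_inf, LinearMap.mem_ker,
    Fintype.linearCombination_apply, smul_eq_mul, mul_one, funext_iff, LinearMap.funLeft_apply,
    Pi.zero_apply, Subtype.forall, ℓ] at hd
  exact ⟨d, hd0, hd.2.2, hd.1, hd.2.1⟩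

theorem exists_direction_of_two_lt_card_support {q : V → ℝ}
    (hq : 2 < (univ.filter fun u => q u ≠ 0).card) (c g : V → ℝ) :
    ∃ d : V → ℝ, (∀ u, q u = 0 → d u = 0) ∧ ∑ u, d u = 0 ∧ ∑ u, d u * c u = 0 ∧
      0 ≤ ∑ u, g u * d u ∧ ∃ u, d u < 0 := by
  obtain ⟨d, hd0, hds, hd, hdc⟩ := exists_ne_zero_sum_eq_zero_sum_mul_eq_zero hq c
  have hdq : ∀ u, q u = 0 → d u = 0 := fun u hu => hds u (by simpa using hu)
  rcases le_total 0 (∑ u, g u * d u) with hgd | hgd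
  · exact ⟨d, hdq, hd, hdc, hgd, exists_neg_of_sum_eq_zero hd0 hd⟩
  · exact ⟨-d, fun u hu => by simp [hdq u hu], by simpa using hd, by simpa using hdc,
      by simpa using hgd, exists_neg_of_sum_eq_zero (neg_ne_zero.2 hd0) (by simpa using hd)⟩

theorem exists_add_smul_nonneg_card_support_lt {q d : V → ℝ} (hq : 0 ≤ q)
    (hdq : ∀ u, q u = 0 → d u = 0) (hneg : ∃ u, d u < 0) :
    ∃ t : ℝ, 0 ≤ t ∧ 0 ≤ q + t • d ∧
      (univ.filter fun u => (q + t • d) u ≠ 0).card < (univ.filter fun u => q u ≠ 0).card := by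
  obtain ⟨u₁, hu₁⟩ := hneg
  obtain ⟨u₀, hu₀, hmin⟩ := exists_min_image (univ.filter fun u => d u < 0) (fun u => q u / -d u)
    ⟨u₁, by simpa using hu₁⟩
  rw [mem_filter] at hu₀
  have hqu₀ : 0 < q u₀ := (hq u₀).lt_of_ne' fun h => hu₀.2.ne (hdq u₀ h)
  set t := q u₀ / -d u₀
  have ht : 0 ≤ t := div_nonneg (hq u₀) (by linarith [hu₀.2])
  refine ⟨t, ht, fun u => ?_, card_lt_card ?_⟩
  · rcases lt_or_ge (d u) 0 with hdu | hdu
    · have := (le_div_iff₀ (neg_pos.2 hdu)).1 (hmin u (by simpa using hdu))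
      simp only [Pi.zero_apply, Pi.add_apply, Pi.smul_apply, smul_eq_mul]
      linarith
    · exact add_nonneg (hq u) (mul_nonneg ht hdu)
  · have hsub : (univ.filter fun u => (q + t • d) u ≠ 0) ⊆ univ.filter fun u => q u ≠ 0 :=
      fun u => by
        simp only [mem_filter, mem_univ, true_and]
        exact mt fun h => by simp [h, hdq u h]
    have hvanish : (q + t • d) u₀ = 0 := by
      simp only [Pi.add_apply, Pi.smul_apply, smul_eq_mul, t]
      field_simp [hu₀.2.ne]
      ring
    exact (ssubset_iff_of_subset hsub).2
      ⟨u₀, by simpa using hqu₀.ne', fun h => (mem_filter.1 h).2 hvanish⟩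

def simplexCut (c : V → ℝ) (b : ℝ) : Set (V → ℝ) :=
  {q | q ∈ simplex V ∧ ∑ u, q u * c u ≤ b}

theorem isCompact_simplexCut (c : V → ℝ) (b : ℝ) : IsCompact (simplexCut c b) := by
  refine (isCompact_stdSimplex ℝ V).of_isClosed_subset ?_ fun q hq => hq.1
  exact (isClosed_stdSimplex ℝ V).inter <| isClosed_le
    (by fun_prop : Continuous fun q : V → ℝ => ∑ u, q u * c u) continuous_const

theorem add_smul_mem_simplexCut {c : V → ℝ} {b : ℝ} {q d : V → ℝ} (hq : q ∈ simplexCut c b)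
    (hd : ∑ u, d u = 0) (hdc : ∑ u, d u * c u = 0) {t : ℝ} (ht : 0 ≤ q + t • d) :
    q + t • d ∈ simplexCut c b := by
  obtain ⟨⟨-, hq1⟩, hqc⟩ := hq
  refine ⟨⟨ht, ?_⟩, ?_⟩
  · simp [sum_add_distrib, ← mul_sum, hd, hq1]
  · simpa [add_mul, mul_assoc, sum_add_distrib, ← mul_sum, hdc] using hqc

theorem exists_isMaxOn_simplexCut_card_support_lt {c g : V → ℝ} {b : ℝ} {q : V → ℝ}
    (hq : q ∈ simplexCut c b) (hmax : IsMaxOn (fun x => ∑ u, g u * x u) (simplexCut c b) q)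
    (hcard : 2 < (univ.filter fun u => q u ≠ 0).card) :
    ∃ q' ∈ simplexCut c b, IsMaxOn (fun x => ∑ u, g u * x u) (simplexCut c b) q' ∧
      (univ.filter fun u => q' u ≠ 0).card < (univ.filter fun u => q u ≠ 0).card := by
  obtain ⟨d, hdq, hd, hdc, hgd, hneg⟩ := exists_direction_of_two_lt_card_support hcard c g
  obtain ⟨t, ht, hnn, hlt⟩ := exists_add_smul_nonneg_card_support_lt hq.1.1 hdq hneg
  refine ⟨q + t • d, add_smul_mem_simplexCut hq hd hdc hnn, fun q' hq' => ?_, hlt⟩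
  calc ∑ u, g u * q' u ≤ ∑ u, g u * q u := hmax hq'
    _ ≤ ∑ u, g u * q u + t * ∑ u, g u * d u := le_add_of_nonneg_right (mul_nonneg ht hgd)
    _ = ∑ u, g u * (q + t • d) u := by simp [mul_add, sum_add_distrib, mul_sum, mul_left_comm]

theorem exists_isMaxOn_simplexCut_card_support_le_two (c g : V → ℝ) (b : ℝ)
    (hne : (simplexCut c b).Nonempty) :
    ∃ q ∈ simplexCut c b, IsMaxOn (fun x => ∑ u, g u * x u) (simplexCut c b) q ∧
      (univ.filter fun u => q u ≠ 0).card ≤ 2 := by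
  obtain ⟨q₀, hq₀⟩ := (isCompact_simplexCut c b).exists_isMaxOn hne
    (f := fun x : V → ℝ => ∑ u, g u * x u) (by fun_prop)
  obtain ⟨q, ⟨hq, hmax⟩, hmin⟩ :=
    (measure fun x : V → ℝ => (univ.filter fun u => x u ≠ 0).card).wf.has_min
      {x | x ∈ simplexCut c b ∧ IsMaxOn (fun y : V → ℝ => ∑ u, g u * y u) (simplexCut c b) x}
      ⟨q₀, hq₀⟩
  refine ⟨q, hq, hmax, not_lt.1 fun h => ?_⟩
  obtain ⟨q', hq', hmax', hlt⟩ := exists_isMaxOn_simplexCut_card_support_lt hq hmax h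
  exact hmin q' ⟨hq', hmax'⟩ hlt

theorem pplFeasible_eq_simplexCut (p : V → ℝ) (ε : ℝ) :
    pplFeasible p ε =
      simplexCut (fun u => -Real.log (p u)) (-∑ u, p u * Real.log (p u) + ε) := by
  ext q
  simp [pplFeasible, simplexCut]

end

theorem stmt_17_general {V : Type*} [Fintype V]
    (p : V → ℝ) (hp : p ∈ simplex V)
    (g : V → ℝ) (ε : ℝ) (hε : 0 ≤ ε) :
    -- the feasible set is nonempty and compact
    (pplFeasible p ε).Nonempty ∧ IsCompact (pplFeasible p ε) ∧
    -- and there is an optimal solution supported on at most two points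
    ∃ q ∈ pplFeasible p ε,
      (∀ q' ∈ pplFeasible p ε, ∑ u, g u * q' u ≤ ∑ u, g u * q u) ∧
      (Finset.univ.filter (fun u => q u ≠ 0)).card ≤ 2 := by
  have hne : (pplFeasible p ε).Nonempty := ⟨p, hp, by linarith⟩
  rw [pplFeasible_eq_simplexCut] at hne ⊢
  exact ⟨hne, isCompact_simplexCut _ _, exists_isMaxOn_simplexCut_card_support_le_two _ g _ hne⟩

theorem stmt_17 {V : Type*} [Fintype V] [Nonempty V]
    (p : V → ℝ) (hp : p ∈ simplex V) (hppos : ∀ u, 0 < p u)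
    (g : V → ℝ) (ε : ℝ) (hε : 0 ≤ ε) :
    -- the feasible set is nonempty and compact
    (pplFeasible p ε).Nonempty ∧ IsCompact (pplFeasible p ε) ∧
    -- and there is an optimal solution supported on at most two points
    ∃ q ∈ pplFeasible p ε,
      (∀ q' ∈ pplFeasible p ε, ∑ u, g u * q' u ≤ ∑ u, g u * q u) ∧
      (Finset.univ.filter (fun u => q u ≠ 0)).card ≤ 2 :=
  stmt_17_general p hp g ε hε
end

section
/- Let Σ be a nonempty finite set, let p ∈ Δ(Σ) have full support, let G = (G_u)_{u∈Σ} be a random vector whose coordinates are i.i.d. from an atomless (continuous) probability law on ℝ with finite first moment, and let ε ≥ 0. Consider the problem of maximizing E[Σ_{u∈Σ} G_u q(G)_u] over measurable functions q : ℝ^Σ → Δ(Σ) subject to Σ_{u∈Σ} (p_u − E[q(G)_u])·log p_u ≤ ε. Then there exists λ ≥ 0 such that the function q*(g)_u = 1{u = argmax_{v∈Σ}(g_v + λ log p_v)} is an optimal solution, where λ is chosen so that Σ_{u∈Σ} (p_u − E[q*(G)_u])·log p_u = ε if such λ exists, and λ = 0 otherwise. -/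
open Finset MeasureTheory

/-- A choice of maximizer of `f : V → ℝ`. -/
noncomputable def argmaxOf {V : Type*} [Fintype V] [Nonempty V] (f : V → ℝ) : V :=
  (Finset.exists_max_image Finset.univ f Finset.univ_nonempty).choose

open Classical in
/-- The deterministic sampling rule `q*(g)_u = 1{u = argmax_v (g_v + λ log p_v)}`. -/
noncomputable def qArgmax {V : Type*} [Fintype V] [Nonempty V] (p : V → ℝ) (l : ℝ) :
    (V → ℝ) → V → ℝ :=
  fun g u => if u = argmaxOf (fun v => g v + l * Real.log (p v)) then 1 else 0


/-!
Lagrangian duality. For a multiplier `l ≥ 0`, the rule `q*_l` maximizes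
`∑ u, (g u + l log p u) q u` pointwise over the simplex, hence maximizes
`E[∑ G q] + l E[∑ q log p]` over all rules. If the constraint is saturated at `q*_l` (or `l = 0`),
every feasible rule has `E[∑ q log p] ≥ E[∑ q*_l log p]`, so `q*_l` is optimal.

A saturating `l` exists by the intermediate value theorem. Ties among the `G u + l log p u` have
probability zero (atomless i.i.d. coordinates), so the constraint value of `q*_l` is continuous in
`l`; as `l → ∞` it tends to `∑ p log p - max log p`, which is negative unless `p` is uniform, and
for uniform `p` the constraint value is identically zero.
-/

open Filter Topology ProbabilityTheory

section Argmax
variable {V : Type*} [Fintype V] [Nonempty V]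

lemma le_argmaxOf (f : V → ℝ) (a : V) : f a ≤ f (argmaxOf f) :=
  (exists_max_image univ f univ_nonempty).choose_spec.2 a (mem_univ a)

lemma argmaxOf_eq_of_forall_lt {f : V → ℝ} {w : V} (h : ∀ a, a ≠ w → f a < f w) :
    argmaxOf f = w := by
  by_contra hne
  exact (h _ hne).not_ge (le_argmaxOf f w)

lemma sum_mul_le_argmaxOf {q : V → ℝ} (hq : q ∈ simplex V) (f : V → ℝ) :
    ∑ u, f u * q u ≤ f (argmaxOf f) :=
  calc ∑ u, f u * q u ≤ ∑ u, f (argmaxOf f) * q u :=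
        sum_le_sum fun u _ => mul_le_mul_of_nonneg_right (le_argmaxOf f u) (hq.1 u)
    _ = f (argmaxOf f) := by rw [← mul_sum, hq.2, mul_one]

-- `argmaxOf f` is a fixed choice function applied to the (finite) set of maximizers of `f`.
lemma measurable_comp_argmaxOf {α β : Type*} [MeasurableSpace α] [MeasurableSpace β]
    {F : α → V → ℝ} (hF : ∀ v, Measurable fun x => F x v) (h : V → β) :
    Measurable fun x => h (argmaxOf (F x)) := by
  classical
  let pick : (V → Prop) → V := fun P => if hP : ∃ b, P b then hP.choose else Classical.arbitrary V
  have hpick : ∀ x, argmaxOf (F x) = pick fun b => b ∈ univ ∧ ∀ a ∈ univ, F x a ≤ F x b :=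
    fun x => (dif_pos _).symm
  simp_rw [hpick]
  refine (measurable_of_countable (h ∘ pick)).comp (measurable_pi_lambda _ fun b => ?_)
  exact measurable_const.and (Measurable.forall fun a => measurable_const.imp
    (measurableSet_setOfPred.1 (measurableSet_le (hF a) (hF b))))

lemma eventually_argmaxOf_eq {X : Type*} [TopologicalSpace X] {F : X → V → ℝ} {x₀ : X}
    (hF : ∀ v, ContinuousAt (fun x => F x v) x₀) (hinj : Function.Injective (F x₀)) :
    ∀ᶠ x in 𝓝 x₀, argmaxOf (F x) = argmaxOf (F x₀) := by
  have hlt : ∀ v, ∀ᶠ x in 𝓝 x₀, v ≠ argmaxOf (F x₀) → F x v < F x (argmaxOf (F x₀)) := by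
    intro v
    by_cases hv : v = argmaxOf (F x₀)
    · exact Eventually.of_forall fun _ h => absurd hv h
    · exact ((hF v).eventually_lt (hF _)
        ((le_argmaxOf _ v).lt_of_ne (hinj.ne hv))).mono fun _ h _ => h
  exact (eventually_all.2 hlt).mono fun _ h => argmaxOf_eq_of_forall_lt h

lemma eventually_apply_argmaxOf_add_mul (g c : V → ℝ) :
    ∀ᶠ l in atTop, c (argmaxOf fun v => g v + l * c v) = c (argmaxOf c) := by
  have hlt : ∀ v, ∀ᶠ l : ℝ in atTop, c v < c (argmaxOf c) →
      g v + l * c v < g (argmaxOf c) + l * c (argmaxOf c) := by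
    intro v
    by_cases hv : c v < c (argmaxOf c)
    · have : Tendsto (fun l : ℝ => l * (c (argmaxOf c) - c v) + (g (argmaxOf c) - g v))
          atTop atTop :=
        tendsto_atTop_add_const_right _ _
          (tendsto_id.atTop_mul_const (sub_pos.2 hv))
      exact (this.eventually_gt_atTop 0).mono fun l h _ => by linarith
    · exact Eventually.of_forall fun _ h => absurd h hv
  filter_upwards [eventually_all.2 hlt] with l hl
  by_contra hne
  have := hl _ ((le_argmaxOf c _).lt_of_ne hne)
  exact this.not_ge (le_argmaxOf (fun v => g v + l * c v) _)

end Argmax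

lemma norm_apply_le_one_of_mem_simplex {V : Type*} [Fintype V] {q : V → ℝ} (hq : q ∈ simplex V)
    (u : V) : ‖q u‖ ≤ 1 := by
  rw [Real.norm_of_nonneg (hq.1 u), ← hq.2]
  exact single_le_sum (fun v _ => hq.1 v) (mem_univ u)

section SamplingRule
variable {V : Type*} [Fintype V] [Nonempty V]

lemma qArgmax_mem_simplex (p : V → ℝ) (l : ℝ) (g : V → ℝ) : qArgmax p l g ∈ simplex V := by
  classical
  refine ⟨fun u => ?_, ?_⟩ <;> simp only [qArgmax]
  · split_ifs <;> norm_num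
  · simp

lemma sum_mul_qArgmax (p : V → ℝ) (l : ℝ) (g f : V → ℝ) :
    ∑ u, f u * qArgmax p l g u = f (argmaxOf fun v => g v + l * Real.log (p v)) := by
  classical
  simp [qArgmax, mul_ite, sum_ite_eq']

lemma measurable_qArgmax (p : V → ℝ) (l : ℝ) : Measurable (qArgmax p l) := by
  classical
  exact measurable_comp_argmaxOf (fun v => (measurable_pi_apply v).add_const _)
    fun w u => if u = w then (1 : ℝ) else 0

lemma sum_add_mul_le_qArgmax (p : V → ℝ) (l : ℝ) (g : V → ℝ) {q : V → ℝ} (hq : q ∈ simplex V) :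
    ∑ u, g u * q u + l * ∑ u, Real.log (p u) * q u ≤
      ∑ u, g u * qArgmax p l g u + l * ∑ u, Real.log (p u) * qArgmax p l g u := by
  rw [sum_mul_qArgmax, sum_mul_qArgmax, mul_sum, ← sum_add_distrib]
  convert sum_mul_le_argmaxOf hq (fun v => g v + l * Real.log (p v)) using 2 with u
  ring

end SamplingRule

section Integrals
variable {V : Type*} [Fintype V] {Ω : Type*} [MeasurableSpace Ω] {μ : Measure Ω}
  {Q : Ω → V → ℝ}

lemma integrable_apply_of_mem_simplex [IsFiniteMeasure μ] (hQ : Measurable Q)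
    (hQs : ∀ ω, Q ω ∈ simplex V) (u : V) : Integrable (fun ω => Q ω u) μ :=
  (integrable_const 1).mono' ((measurable_pi_apply u).comp hQ).aestronglyMeasurable
    (ae_of_all _ fun ω => norm_apply_le_one_of_mem_simplex (hQs ω) u)

lemma integrable_sum_mul_of_mem_simplex {f : Ω → V → ℝ} (hf : ∀ u, Integrable (fun ω => f ω u) μ)
    (hQ : Measurable Q) (hQs : ∀ ω, Q ω ∈ simplex V) :
    Integrable (fun ω => ∑ u, f ω u * Q ω u) μ :=
  integrable_finsetSum _ fun u _ =>
    (hf u).mul_bdd ((measurable_pi_apply u).comp hQ).aestronglyMeasurable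
    (ae_of_all _ fun ω => norm_apply_le_one_of_mem_simplex (hQs ω) u)

lemma sum_sub_integral_mul_eq [IsFiniteMeasure μ] (hQ : Measurable Q)
    (hQs : ∀ ω, Q ω ∈ simplex V) (p c : V → ℝ) :
    ∑ u, (p u - ∫ ω, Q ω u ∂μ) * c u = ∑ u, p u * c u - ∫ ω, ∑ u, c u * Q ω u ∂μ := by
  rw [integral_finsetSum _ fun u _ => (integrable_apply_of_mem_simplex hQ hQs u).const_mul _,
    ← sum_sub_distrib]
  refine sum_congr rfl fun u _ => ?_
  rw [integral_const_mul]
  ring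

end Integrals

section Lagrangian
variable {V : Type*} [Fintype V] [Nonempty V] {Ω : Type*} [MeasurableSpace Ω] {μ : Measure Ω}
  [IsFiniteMeasure μ] {G : Ω → V → ℝ}

lemma integral_add_mul_le_qArgmax (hG : Measurable G)
    (hGi : ∀ u, Integrable (fun ω => G ω u) μ) (p : V → ℝ) (l : ℝ)
    {q : (V → ℝ) → V → ℝ} (hq : Measurable q) (hqs : ∀ g, q g ∈ simplex V) :
    ∫ ω, ∑ u, G ω u * q (G ω) u ∂μ + l * ∫ ω, ∑ u, Real.log (p u) * q (G ω) u ∂μ ≤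
      ∫ ω, ∑ u, G ω u * qArgmax p l (G ω) u ∂μ +
        l * ∫ ω, ∑ u, Real.log (p u) * qArgmax p l (G ω) u ∂μ := by
  have hint : ∀ Q : Ω → V → ℝ, Measurable Q → (∀ ω, Q ω ∈ simplex V) →
      Integrable (fun ω => ∑ u, G ω u * Q ω u) μ ∧
        Integrable (fun ω => l * ∑ u, Real.log (p u) * Q ω u) μ := fun Q hQ hQs =>
    ⟨integrable_sum_mul_of_mem_simplex hGi hQ hQs,
      (integrable_sum_mul_of_mem_simplex (f := fun _ u => Real.log (p u))
        (fun _ => integrable_const _) hQ hQs).const_mul l⟩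
  obtain ⟨h₁, h₂⟩ := hint (fun ω => q (G ω)) (hq.comp hG) fun ω => hqs (G ω)
  obtain ⟨h₁', h₂'⟩ := hint (fun ω => qArgmax p l (G ω)) ((measurable_qArgmax p l).comp hG)
    fun ω => qArgmax_mem_simplex p l _
  rw [← integral_const_mul, ← integral_const_mul, ← integral_add h₁ h₂, ← integral_add h₁' h₂']
  exact integral_mono (h₁.add h₂) (h₁'.add h₂')
    fun ω => sum_add_mul_le_qArgmax p l (G ω) (hqs (G ω))

lemma integral_le_qArgmax_of_feasible (hG : Measurable G)
    (hGi : ∀ u, Integrable (fun ω => G ω u) μ) (p : V → ℝ) {l ε : ℝ} (hl : 0 ≤ l)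
    (hsat : ∑ u, (p u - ∫ ω, qArgmax p l (G ω) u ∂μ) * Real.log (p u) = ε ∨ l = 0)
    {q : (V → ℝ) → V → ℝ} (hq : Measurable q) (hqs : ∀ g, q g ∈ simplex V)
    (hfeas : ∑ u, (p u - ∫ ω, q (G ω) u ∂μ) * Real.log (p u) ≤ ε) :
    ∫ ω, ∑ u, G ω u * q (G ω) u ∂μ ≤ ∫ ω, ∑ u, G ω u * qArgmax p l (G ω) u ∂μ := by
  have hlag := integral_add_mul_le_qArgmax hG hGi p l hq hqs
  rcases hsat with hsat | rfl
  · rw [sum_sub_integral_mul_eq (Q := fun ω => qArgmax p l (G ω))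
      ((measurable_qArgmax p l).comp hG) fun ω => qArgmax_mem_simplex p l _] at hsat
    rw [sum_sub_integral_mul_eq (Q := fun ω => q (G ω)) (hq.comp hG) fun ω => hqs (G ω)] at hfeas
    nlinarith
  · simpa using hlag

end Lagrangian

section MeanAtArgmax
variable {V : Type*} [Fintype V] [Nonempty V] {Ω : Type*} [MeasurableSpace Ω] {μ : Measure Ω}
  {G : Ω → V → ℝ}

noncomputable def meanAtArgmax (μ : Measure Ω) (G : Ω → V → ℝ) (c : V → ℝ) (l : ℝ) : ℝ :=
  ∫ ω, c (argmaxOf fun v => G ω v + l * c v) ∂μ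

lemma tendsto_meanAtArgmax [IsFiniteMeasure μ] (hG : Measurable G) (c : V → ℝ)
    {L : Filter ℝ} [L.IsCountablyGenerated] {f : Ω → ℝ}
    (hf : ∀ᵐ ω ∂μ, Tendsto (fun l => c (argmaxOf fun v => G ω v + l * c v)) L (𝓝 (f ω))) :
    Tendsto (meanAtArgmax μ G c) L (𝓝 (∫ ω, f ω ∂μ)) :=
  tendsto_integral_filter_of_dominated_convergence (fun _ => ‖c‖)
    (Eventually.of_forall fun _ => (measurable_comp_argmaxOf
      (fun v => ((measurable_pi_apply v).comp hG).add_const _) c).aestronglyMeasurable)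
    (Eventually.of_forall fun _ => ae_of_all _ fun _ => norm_le_pi_norm c _)
    (integrable_const _) hf

lemma continuousAt_meanAtArgmax [IsFiniteMeasure μ] (hG : Measurable G) (c : V → ℝ) {l₀ : ℝ}
    (hinj : ∀ᵐ ω ∂μ, Function.Injective fun v => G ω v + l₀ * c v) :
    ContinuousAt (meanAtArgmax μ G c) l₀ :=
  tendsto_meanAtArgmax hG c <| hinj.mono fun ω h => tendsto_const_nhds.congr'
    ((eventually_argmaxOf_eq (F := fun l v => G ω v + l * c v) (fun _ => by fun_prop) h).mono
      fun _ hl => congrArg c hl.symm)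

lemma tendsto_meanAtArgmax_atTop [IsProbabilityMeasure μ] (hG : Measurable G) (c : V → ℝ) :
    Tendsto (meanAtArgmax μ G c) atTop (𝓝 (c (argmaxOf c))) := by
  simpa using tendsto_meanAtArgmax (μ := μ) hG c (f := fun _ => c (argmaxOf c)) <|
    ae_of_all _ fun ω => tendsto_const_nhds.congr'
      ((eventually_apply_argmaxOf_add_mul (G ω) c).mono fun _ hl => hl.symm)

end MeanAtArgmax

section IID
variable {V : Type*} [Fintype V] {Ω : Type*} [MeasurableSpace Ω] {μ : Measure Ω}
  {G : Ω → V → ℝ} {ν : Measure ℝ} [IsProbabilityMeasure ν]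

lemma ae_apply_ne_apply_add_pi [NullSingletonClass ν] {u v : V} (huv : u ≠ v) (t : ℝ) :
    ∀ᵐ g ∂Measure.pi (fun _ : V => ν), g u ≠ g v + t := by
  have hind : IndepFun (fun g : V → ℝ => g u) (fun g => g v) (Measure.pi fun _ => ν) :=
    (iIndepFun_pi (X := fun _ => id) fun _ => aemeasurable_id).indepFun huv
  have hmap : (Measure.pi fun _ : V => ν).map (fun g => (g u, g v)) = ν.prod ν := by
    rw [(indepFun_iff_map_prod_eq_prod_map_map (measurable_pi_apply u).aemeasurable
      (measurable_pi_apply v).aemeasurable).1 hind, (measurePreserving_eval _ u).map_eq,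
      (measurePreserving_eval _ v).map_eq]
  refine ae_of_ae_map (f := fun g : V → ℝ => (g u, g v)) (p := fun z => z.1 ≠ z.2 + t)
    ((measurable_pi_apply u).prodMk (measurable_pi_apply v)).aemeasurable ?_
  rw [hmap, Measure.ae_prod_iff_ae_ae (p := fun z : ℝ × ℝ => z.1 ≠ z.2 + t)
    (measurableSet_eq_fun measurable_fst (measurable_snd.add_const t)).compl]
  exact ae_of_all _ fun x => (Measure.ae_ne ν (x - t)).mono fun y hy h => hy (by linarith)

lemma ae_injective_add_of_measurePreserving_pi [NullSingletonClass ν]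
    (hmp : MeasurePreserving G μ (Measure.pi fun _ : V => ν)) (c : V → ℝ) :
    ∀ᵐ ω ∂μ, Function.Injective fun v => G ω v + c v := by
  have hpair : ∀ u v, ∀ᵐ g ∂Measure.pi (fun _ : V => ν), g u + c u = g v + c v → u = v := by
    intro u v
    by_cases huv : u = v
    · exact ae_of_all _ fun _ _ => huv
    · exact (ae_apply_ne_apply_add_pi huv (c v - c u)).mono fun g hg h =>
        absurd (by linarith) hg
  refine hmp.quasiMeasurePreserving.ae (p := fun g => Function.Injective fun v => g v + c v) ?_
  filter_upwards [ae_all_iff.2 fun u => ae_all_iff.2 (hpair u)] with g hg u v huv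
    using hg u v huv

lemma integrable_apply_of_measurePreserving_pi
    (hmp : MeasurePreserving G μ (Measure.pi fun _ : V => ν)) (hmom : Integrable (fun x => x) ν)
    (u : V) : Integrable (fun ω => G ω u) μ :=
  ((measurePreserving_eval _ u).comp hmp).integrable_comp_of_integrable hmom

end IID

lemma exists_nonneg_le_and_eq_or_eq_zero {f : ℝ → ℝ} {N ε : ℝ} (hN : 0 ≤ N)
    (hf : ContinuousOn f (Set.Icc 0 N)) (hfN : f N ≤ ε) :
    ∃ l, 0 ≤ l ∧ f l ≤ ε ∧ (f l = ε ∨ l = 0) := by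
  by_cases h0 : f 0 ≤ ε
  · exact ⟨0, le_rfl, h0, Or.inr rfl⟩
  · obtain ⟨l, hl, hfl⟩ := intermediate_value_Icc' hN hf ⟨hfN, (not_le.1 h0).le⟩
    exact ⟨l, hl.1, hfl.le, Or.inl hfl⟩

lemma exists_nonneg_sum_mul_sub_meanAtArgmax_le {V : Type*} [Fintype V] [Nonempty V]
    {Ω : Type*} [MeasurableSpace Ω] {μ : Measure Ω} [IsProbabilityMeasure μ] {G : Ω → V → ℝ}
    (hG : Measurable G) {p : V → ℝ} (hp : p ∈ simplex V) (hppos : ∀ u, 0 < p u) (c : V → ℝ)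
    {ε : ℝ} (hε : 0 ≤ ε) : ∃ N, 0 ≤ N ∧ ∑ u, p u * c u - meanAtArgmax μ G c N ≤ ε := by
  by_cases hc : ∃ u, c u < c (argmaxOf c)
  · obtain ⟨u, hu⟩ := hc
    have hlt : ∑ u, p u * c u < c (argmaxOf c) :=
      calc ∑ u, p u * c u < ∑ u, p u * c (argmaxOf c) :=
            sum_lt_sum (fun v _ => mul_le_mul_of_nonneg_left (le_argmaxOf c v) (hppos v).le)
              ⟨u, mem_univ u, mul_lt_mul_of_pos_left hu (hppos u)⟩
        _ = c (argmaxOf c) := by rw [← sum_mul, hp.2, one_mul]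
    have hlim := (tendsto_const_nhds (x := ∑ u, p u * c u)).sub
      (tendsto_meanAtArgmax_atTop (μ := μ) hG c)
    obtain ⟨N, hN, hN₀⟩ :=
      ((hlim.eventually_lt_const (show _ < ε by linarith)).and (eventually_ge_atTop 0)).exists
    exact ⟨N, hN₀, hN.le⟩
  · -- `p` has full support, so `∑ p c` can reach `max c` only if `c` is constant.
    obtain ⟨a, ha⟩ : ∃ a, ∀ u, c u = a :=
      ⟨_, fun u => (le_argmaxOf c u).antisymm (not_lt.1 fun h => hc ⟨u, h⟩)⟩
    refine ⟨0, le_rfl, ?_⟩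
    simp [meanAtArgmax, ha, ← sum_mul, hp.2, hε]

theorem stmt_18 {V : Type*} [Fintype V] [Nonempty V]
    {Ω : Type*} [MeasurableSpace Ω] (μ : Measure Ω) [IsProbabilityMeasure μ]
    (G : Ω → V → ℝ) (hG : Measurable G)
    (ν : Measure ℝ) [IsProbabilityMeasure ν]
    -- `ν` is atomless and has a finite first moment
    (hatomless : ∀ x : ℝ, ν {x} = 0)
    (hmom : Integrable (fun x : ℝ => x) ν)
    -- the coordinates of `G` are i.i.d. with law `ν`
    (hlaw : Measure.map G μ = Measure.pi (fun _ : V => ν))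
    (p : V → ℝ) (hp : p ∈ simplex V) (hppos : ∀ u, 0 < p u)
    (ε : ℝ) (hε : 0 ≤ ε) :
    ∃ l : ℝ, 0 ≤ l ∧
      -- `q*` is feasible: measurable, simplex-valued, and satisfies the soft
      -- PPL constraint `∑ u, (p u − E[q*(G) u]) log p u ≤ ε`
      Measurable (qArgmax p l) ∧
      (∀ g, qArgmax p l g ∈ simplex V) ∧
      (∑ u, (p u - ∫ ω, qArgmax p l (G ω) u ∂μ) * Real.log (p u)) ≤ ε ∧
      -- `q*` is optimal among all feasible sampling rules
      (∀ q : (V → ℝ) → V → ℝ, Measurable q → (∀ g, q g ∈ simplex V) →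
        (∑ u, (p u - ∫ ω, q (G ω) u ∂μ) * Real.log (p u)) ≤ ε →
        ∫ ω, ∑ u, G ω u * q (G ω) u ∂μ ≤
          ∫ ω, ∑ u, G ω u * qArgmax p l (G ω) u ∂μ) ∧
      -- `l` saturates the constraint if possible, else `l = 0`
      ((∑ u, (p u - ∫ ω, qArgmax p l (G ω) u ∂μ) * Real.log (p u)) = ε ∨ l = 0) := by
  have hmp : MeasurePreserving G μ (Measure.pi fun _ : V => ν) := ⟨hG, hlaw⟩
  have : NullSingletonClass ν := ⟨hatomless⟩
  have hconstraint : ∀ l, ∑ u, (p u - ∫ ω, qArgmax p l (G ω) u ∂μ) * Real.log (p u) =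
      ∑ u, p u * Real.log (p u) - meanAtArgmax μ G (fun u => Real.log (p u)) l := fun l => by
    rw [sum_sub_integral_mul_eq (Q := fun ω => qArgmax p l (G ω))
      ((measurable_qArgmax p l).comp hG) fun ω => qArgmax_mem_simplex p l _]
    simp only [sum_mul_qArgmax, meanAtArgmax]
  have hcont : Continuous (meanAtArgmax μ G fun u => Real.log (p u)) :=
    continuous_iff_continuousAt.2 fun l => continuousAt_meanAtArgmax hG _
      (ae_injective_add_of_measurePreserving_pi hmp _)
  obtain ⟨N, hN, hNε⟩ := exists_nonneg_sum_mul_sub_meanAtArgmax_le (μ := μ) hG hp hppos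
    (fun u => Real.log (p u)) hε
  obtain ⟨l, hl, hle, hsat⟩ :=
    exists_nonneg_le_and_eq_or_eq_zero hN (continuous_const.sub hcont).continuousOn hNε
  simp only [Pi.sub_apply, ← hconstraint] at hle hsat
  exact ⟨l, hl, measurable_qArgmax p l, qArgmax_mem_simplex p l, hle,
    fun q hq hqs => integral_le_qArgmax_of_feasible hG
      (integrable_apply_of_measurePreserving_pi hmp hmom) p hl hsat hq hqs, hsat⟩
end
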